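/- arXiv:2111.14974 — 9 statements merged into one kernel-verified Lean document; each statement's English description precedes it below -/
import Mathlib

section
/- Let C be a comparator circuit on n variables whose gates, in order, are g_1, ..., g_s, and suppose g_i = (α, β) is a TYPE-2 useless gate of C. Let C' be the comparator circuit with the same wires, wire labels and output-wire designation (with the roles of α and β also swapped in the output designation if the output wire is α or β), whose gates are g_1, ..., g_{i-1}, g'_{i+1}, ..., g'_s, where for j = i+1, ..., s the gate g'_j is obtained from g_j by replacing each occurrence of the wire α by β and simultaneously each occurrence of β by α. Then C' computes the same Boolean function as C. -/
/-- A comparator circuit on `n` Boolean variables with `ℓ` wires.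
Each wire is labelled by a literal: a pair `(i, neg)` meaning the variable `x_i`
if `neg = false` and its negation `¬x_i` if `neg = true`.  Each gate is an ordered
pair of distinct wires `(w, w')`: applying it, `w` receives the conjunction of the
two held values and `w'` receives their disjunction.  A designated output wire
carries the result of the computation. -/
structure CompCircuit (n ℓ : ℕ) where
  label : Fin ℓ → Fin n × Bool
  gates : List (Fin ℓ × Fin ℓ)
  distinct : ∀ g ∈ gates, g.1 ≠ g.2
  out : Fin ℓ

namespace CompCircuit

variable {n ℓ : ℕ}

/-- Value of the literal `(i, neg)` on input `x`. -/
def litVal (x : Fin n → Bool) (p : Fin n × Bool) : Bool :=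
  if p.2 then !(x p.1) else x p.1

/-- Applying a comparator gate to the current wire values. -/
def applyGate (g : Fin ℓ × Fin ℓ) (v : Fin ℓ → Bool) : Fin ℓ → Bool :=
  fun w => if w = g.1 then v g.1 && v g.2 else if w = g.2 then v g.1 || v g.2 else v w

/-- Initial wire values on input `x`: each wire holds the value of its literal. -/
def init (C : CompCircuit n ℓ) (x : Fin n → Bool) : Fin ℓ → Bool :=
  fun w => litVal x (C.label w)

/-- Wire values after all the gates have been applied in order. -/
def run (C : CompCircuit n ℓ) (x : Fin n → Bool) : Fin ℓ → Bool :=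
  C.gates.foldl (fun v g => applyGate g v) (C.init x)

/-- The output of the circuit: the final value of the output wire. -/
def eval (C : CompCircuit n ℓ) (x : Fin n → Bool) : Bool :=
  C.run x C.out

/-- Wire values after the first `t` gates have been applied (i.e. just before gate `t`). -/
def stateAfter (C : CompCircuit n ℓ) (x : Fin n → Bool) (t : ℕ) : Fin ℓ → Bool :=
  (C.gates.take t).foldl (fun v g => applyGate g v) (C.init x)

/-- The pair `(u_g(x), v_g(x))` of in-values of gate number `i` on input `x`. -/
def gateIn (C : CompCircuit n ℓ) (x : Fin n → Bool) (i : Fin C.gates.length) : Bool × Bool :=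
  (C.stateAfter x i (C.gates.get i).1, C.stateAfter x i (C.gates.get i).2)

/-- Gate `i` is TYPE-1 useless: its in-values never form the pair `(1,0)`,
i.e. they always lie in `{(0,1),(0,0),(1,1)}`. -/
def Type1UselessAt (C : CompCircuit n ℓ) (i : Fin C.gates.length) : Prop :=
  ∀ x : Fin n → Bool, C.gateIn x i ≠ (true, false)

/-- Gate `i` is TYPE-2 useless: its in-values never form the pair `(0,1)`,
i.e. they always lie in `{(1,0),(0,0),(1,1)}`. -/
def Type2UselessAt (C : CompCircuit n ℓ) (i : Fin C.gates.length) : Prop :=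
  ∀ x : Fin n → Bool, C.gateIn x i ≠ (false, true)

/-- Gate `i` is useless if it is TYPE-1 or TYPE-2 useless. -/
def UselessAt (C : CompCircuit n ℓ) (i : Fin C.gates.length) : Prop :=
  C.Type1UselessAt i ∨ C.Type2UselessAt i

end CompCircuit

namespace CompCircuit

lemma applyGate_swap (α β : Fin ℓ) (g : Fin ℓ × Fin ℓ) (v : Fin ℓ → Bool) :
    applyGate (Equiv.swap α β g.1, Equiv.swap α β g.2) (fun w => v (Equiv.swap α β w))
      = fun w => applyGate g v (Equiv.swap α β w) := by
  funext w
  have h1 : (w = Equiv.swap α β g.1) ↔ (Equiv.swap α β w = g.1) := by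
    constructor <;> intro hh
    · rw [hh, Equiv.swap_apply_self]
    · rw [← hh, Equiv.swap_apply_self]
  have h2 : (w = Equiv.swap α β g.2) ↔ (Equiv.swap α β w = g.2) := by
    constructor <;> intro hh
    · rw [hh, Equiv.swap_apply_self]
    · rw [← hh, Equiv.swap_apply_self]
  simp only [applyGate, Equiv.swap_apply_self, h1, h2]

lemma foldl_swap (α β : Fin ℓ) (L : List (Fin ℓ × Fin ℓ)) (v : Fin ℓ → Bool) :
    (L.map (fun g => (Equiv.swap α β g.1, Equiv.swap α β g.2))).foldl
        (fun v g => applyGate g v) (fun w => v (Equiv.swap α β w))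
      = fun w => L.foldl (fun v g => applyGate g v) v (Equiv.swap α β w) := by
  induction L generalizing v with
  | nil => rfl
  | cons g L ih =>
      simp only [List.map_cons, List.foldl_cons, applyGate_swap]
      exact ih _

end CompCircuit


/-- If gate `g_i = (α, β)` of a comparator circuit `C` is TYPE-2 useless,
then the circuit obtained by deleting `g_i` and swapping the roles of the wires `α` and `β`
in all later gates (and in the output designation) computes the same function as `C`. -/
theorem type2_useless_gate_removal {n ℓ : ℕ} (C : CompCircuit n ℓ)
    (i : Fin C.gates.length) (α β : Fin ℓ) (hαβ : C.gates.get i = (α, β))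
    (h : C.Type2UselessAt i) :
    ∀ x : Fin n → Bool,
      CompCircuit.eval
        { label := C.label
          gates := C.gates.take (i : ℕ) ++
            (C.gates.drop ((i : ℕ) + 1)).map
              (fun g => (Equiv.swap α β g.1, Equiv.swap α β g.2))
          distinct := by
            intro g hg
            rcases List.mem_append.mp hg with hmem | hmem
            · exact C.distinct g (List.take_subset _ _ hmem)
            · obtain ⟨g', hg', rfl⟩ := List.mem_map.mp hmem
              have hd := C.distinct g' (List.drop_subset _ _ hg')
              exact fun he => hd ((Equiv.swap α β).injective he)
          out := Equiv.swap α β C.out } x = C.eval x := by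
  intro x
  set s := C.stateAfter x (i : ℕ) with hs
  have hne := h x
  rw [CompCircuit.gateIn, hαβ, ← hs] at hne
  -- applying the useless gate is the same as swapping α and β
  have hkey : CompCircuit.applyGate (α, β) s = fun w => s (Equiv.swap α β w) := by
    funext w
    rcases eq_or_ne w α with rfl | hwa
    · rw [Equiv.swap_apply_left]
      simp only [CompCircuit.applyGate, if_pos rfl]
      cases hA : s w <;> cases hB : s β <;> simp_all
    · rcases eq_or_ne w β with rfl | hwb
      · rw [Equiv.swap_apply_right]
        simp only [CompCircuit.applyGate, if_neg hwa, if_pos rfl]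
        cases hA : s α <;> cases hB : s w <;> simp_all
      · rw [Equiv.swap_apply_of_ne_of_ne hwa hwb]
        simp only [CompCircuit.applyGate, if_neg hwa, if_neg hwb]
  have hswap2 : s = fun w => (CompCircuit.applyGate (α, β) s) (Equiv.swap α β w) := by
    rw [hkey]; funext w; simp [Equiv.swap_apply_self]
  -- the run of C factored through gate i
  have hCrun : C.run x = (C.gates.drop ((i : ℕ) + 1)).foldl
      (fun v g => CompCircuit.applyGate g v) (CompCircuit.applyGate (α, β) s) := by
    conv_lhs => rw [CompCircuit.run, ← List.take_append_drop ((i : ℕ) + 1) C.gates,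
      List.foldl_append]
    congr 1
    have htake : C.gates.take ((i : ℕ) + 1) = C.gates.take (i : ℕ) ++ [C.gates.get i] := by
      rw [List.take_succ]
      congr 1
      rw [List.getElem?_eq_getElem i.isLt]
      rfl
    rw [htake, List.foldl_append, hαβ]
    rfl
  rw [CompCircuit.eval, CompCircuit.run, List.foldl_append]
  show ((C.gates.drop ((i : ℕ) + 1)).map
      (fun g => (Equiv.swap α β g.1, Equiv.swap α β g.2))).foldl
      (fun v g => CompCircuit.applyGate g v) s (Equiv.swap α β C.out) = C.eval x
  rw [hswap2, CompCircuit.foldl_swap, ← hCrun]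
  show C.run x (Equiv.swap α β (Equiv.swap α β C.out)) = C.eval x
  rw [Equiv.swap_apply_self]
  rfl
end

section
/- If C is a comparator circuit with ℓ wires and s gates such that every gate of C is useful (i.e., not useless), then s ≤ ℓ·(ℓ−1)/2. -/
/-!
View the value of a wire after `t` gates as a Boolean function of the input. These functions form
a lattice, and a gate replaces the functions `f, g` on its two wires by `f ⊓ g, f ⊔ g`; the gate is
useful exactly when `f` and `g` are incomparable. Count the ordered pairs of wires carrying
comparable functions. In any lattice, for every third element `h`, replacing `f, g` by
`f ⊓ g, f ⊔ g` does not decrease the number of them comparable with `h`, while the pair itself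
becomes comparable. Hence each useful gate raises the count by at least `2`; since the count is at
least `ℓ` (the diagonal) at the start and at most `ℓ²` at the end, `2 s ≤ ℓ² - ℓ`.
-/

open Finset Relation

section Lattice

variable {α : Type*} [Lattice α]

theorem symmGen_inf_or_sup_of_symmGen_left {a c : α} (b : α) (h : SymmGen (· ≤ ·) a c) :
    SymmGen (· ≤ ·) (a ⊓ b) c ∨ SymmGen (· ≤ ·) (a ⊔ b) c := by
  rcases h with h | h
  · exact .inl (.of_le (inf_le_of_left_le h))
  · exact .inr (.of_ge (le_sup_of_le_left h))

theorem symmGen_inf_and_sup_of_symmGen {a b c : α} (ha : SymmGen (· ≤ ·) a c)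
    (hb : SymmGen (· ≤ ·) b c) :
    SymmGen (· ≤ ·) (a ⊓ b) c ∧ SymmGen (· ≤ ·) (a ⊔ b) c := by
  rcases ha with ha | ha <;> rcases hb with hb | hb
  · exact ⟨.of_le (inf_le_of_left_le ha), .of_le (sup_le ha hb)⟩
  · exact ⟨.of_le (inf_le_of_left_le ha), .of_ge (le_sup_of_le_right hb)⟩
  · exact ⟨.of_le (inf_le_of_right_le hb), .of_ge (le_sup_of_le_left ha)⟩
  · exact ⟨.of_ge (le_inf ha hb), .of_ge (le_sup_of_le_left ha)⟩

open scoped Classical in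
noncomputable def comparableIndicator (a b : α) : ℕ :=
  if SymmGen (· ≤ ·) a b then 1 else 0

theorem comparableIndicator_comm (a b : α) :
    comparableIndicator a b = comparableIndicator b a := by
  unfold comparableIndicator
  classical exact if_congr symmGen_comm rfl rfl

theorem comparableIndicator_le_one (a b : α) : comparableIndicator a b ≤ 1 := by
  unfold comparableIndicator; split_ifs <;> simp

@[simp]
theorem comparableIndicator_self (a : α) : comparableIndicator a a = 1 := by
  simp [comparableIndicator]

theorem comparableIndicator_of_le {a b : α} (h : a ≤ b) : comparableIndicator a b = 1 := by
  simp [comparableIndicator, SymmGen.of_le h]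

theorem comparableIndicator_of_ge {a b : α} (h : b ≤ a) : comparableIndicator a b = 1 := by
  simp [comparableIndicator, SymmGen.of_ge h]

theorem comparableIndicator_eq_zero {a b : α} (h : ¬ SymmGen (· ≤ ·) a b) :
    comparableIndicator a b = 0 := by
  simp [comparableIndicator, h]

theorem comparableIndicator_add_le_inf_add_sup (a b c : α) :
    comparableIndicator a c + comparableIndicator b c ≤
      comparableIndicator (a ⊓ b) c + comparableIndicator (a ⊔ b) c := by
  have h₁ : SymmGen (· ≤ ·) a c ∨ SymmGen (· ≤ ·) b c →
      SymmGen (· ≤ ·) (a ⊓ b) c ∨ SymmGen (· ≤ ·) (a ⊔ b) c := by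
    rintro (h | h)
    · exact symmGen_inf_or_sup_of_symmGen_left b h
    · rw [inf_comm, sup_comm]
      exact symmGen_inf_or_sup_of_symmGen_left a h
  have h₂ := symmGen_inf_and_sup_of_symmGen (a := a) (b := b) (c := c)
  unfold comparableIndicator
  split_ifs <;> simp only [le_refl, zero_le, Nat.reduceAdd, Nat.one_le_ofNat] <;> tauto

end Lattice

theorem Fintype.sum_sum_eq_blocks {ι M : Type*} [Fintype ι] [DecidableEq ι] [AddCommMonoid M]
    (S : Finset ι) (f : ι → ι → M) :
    ∑ i, ∑ j, f i j = ∑ i ∈ S, ∑ j ∈ S, f i j + ∑ i ∈ S, ∑ j ∈ Sᶜ, f i j +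
      ∑ i ∈ Sᶜ, ∑ j ∈ S, f i j + ∑ i ∈ Sᶜ, ∑ j ∈ Sᶜ, f i j := by
  simp only [← sum_add_sum_compl S (f _), sum_add_distrib]
  rw [← sum_add_sum_compl S (fun i => ∑ j ∈ S, f i j),
    ← sum_add_sum_compl S (fun i => ∑ j ∈ Sᶜ, f i j)]
  abel

section Family

variable {α ι : Type*} [Lattice α] [Fintype ι]

noncomputable def comparablePairCount (v : ι → α) : ℕ :=
  ∑ w, ∑ w', comparableIndicator (v w) (v w')

theorem comparablePairCount_le_card_mul_card (v : ι → α) :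
    comparablePairCount v ≤ Fintype.card ι * Fintype.card ι := by
  calc comparablePairCount v ≤ ∑ _w : ι, ∑ _w' : ι, 1 :=
        sum_le_sum fun _ _ => sum_le_sum fun _ _ => comparableIndicator_le_one _ _
    _ = Fintype.card ι * Fintype.card ι := by simp

theorem card_le_comparablePairCount (v : ι → α) : Fintype.card ι ≤ comparablePairCount v := by
  calc Fintype.card ι = ∑ w, comparableIndicator (v w) (v w) := by simp
    _ ≤ comparablePairCount v :=
        sum_le_sum fun w _ => single_le_sum (f := fun w' => comparableIndicator (v w) (v w'))
          (fun _ _ => Nat.zero_le _) (mem_univ w)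

variable [DecidableEq ι]

def comparatorStep (a b : ι) (v : ι → α) : ι → α :=
  fun w => if w = a then v a ⊓ v b else if w = b then v a ⊔ v b else v w

theorem comparablePairCount_add_two_le {a b : ι} (v : ι → α) (hab : a ≠ b)
    (h : ¬ SymmGen (· ≤ ·) (v a) (v b)) :
    comparablePairCount v + 2 ≤ comparablePairCount (comparatorStep a b v) := by
  set v' := comparatorStep a b v
  set S : Finset ι := {a, b}
  have h_out : ∀ w ∈ Sᶜ, v' w = v w := by
    intro w hw
    simp only [S, mem_compl, mem_insert, mem_singleton, not_or] at hw
    simp [v', comparatorStep, hw.1, hw.2]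
  have h_old (f : α → ℕ) : ∑ w ∈ S, f (v w) = f (v a) + f (v b) := sum_pair hab
  have h_new (f : α → ℕ) : ∑ w ∈ S, f (v' w) = f (v a ⊓ v b) + f (v a ⊔ v b) := by
    simp [S, sum_pair hab, v', comparatorStep, hab.symm]
  have h_SS_old : ∑ w ∈ S, ∑ w' ∈ S, comparableIndicator (v w) (v w') = 2 := by
    rw [h_old (fun x => ∑ w' ∈ S, comparableIndicator x (v w'))]
    simp only [h_old, comparableIndicator_self, comparableIndicator_eq_zero h,
      comparableIndicator_comm (v b) (v a)]
  have h_SS_new : ∑ w ∈ S, ∑ w' ∈ S, comparableIndicator (v' w) (v' w') = 4 := by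
    have hle : v a ⊓ v b ≤ v a ⊔ v b := inf_le_sup
    rw [h_new (fun x => ∑ w' ∈ S, comparableIndicator x (v' w'))]
    simp only [h_new, comparableIndicator_self, comparableIndicator_of_le hle,
      comparableIndicator_of_ge hle]
  have h_SSc : ∑ w ∈ S, ∑ w' ∈ Sᶜ, comparableIndicator (v w) (v w') ≤
      ∑ w ∈ S, ∑ w' ∈ Sᶜ, comparableIndicator (v' w) (v' w') := by
    rw [sum_comm, sum_comm (s := S)]
    refine sum_le_sum fun w' hw' => ?_
    rw [h_out w' hw', h_old (comparableIndicator · (v w')), h_new (comparableIndicator · (v w'))]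
    exact comparableIndicator_add_le_inf_add_sup _ _ _
  have h_ScS : ∑ w ∈ Sᶜ, ∑ w' ∈ S, comparableIndicator (v w) (v w') ≤
      ∑ w ∈ Sᶜ, ∑ w' ∈ S, comparableIndicator (v' w) (v' w') := by
    refine sum_le_sum fun w hw => ?_
    rw [h_out w hw, h_old (comparableIndicator (v w)), h_new (comparableIndicator (v w))]
    simp only [comparableIndicator_comm (v w)]
    exact comparableIndicator_add_le_inf_add_sup _ _ _
  have h_ScSc : ∑ w ∈ Sᶜ, ∑ w' ∈ Sᶜ, comparableIndicator (v w) (v w') =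
      ∑ w ∈ Sᶜ, ∑ w' ∈ Sᶜ, comparableIndicator (v' w) (v' w') :=
    sum_congr rfl fun w hw => sum_congr rfl fun w' hw' => by rw [h_out w hw, h_out w' hw']
  -- The block `S × S` gains the pairs `(a, b)` and `(b, a)`; no other block loses anything.
  rw [comparablePairCount, comparablePairCount, Fintype.sum_sum_eq_blocks S,
    Fintype.sum_sum_eq_blocks S]
  omega

end Family

namespace CompCircuit

variable {n ℓ : ℕ}

def wireFun (C : CompCircuit n ℓ) (t : ℕ) : Fin ℓ → (Fin n → Bool) → Bool :=
  fun w x => C.stateAfter x t w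

theorem stateAfter_succ (C : CompCircuit n ℓ) (x : Fin n → Bool) {t : ℕ}
    (ht : t < C.gates.length) :
    C.stateAfter x (t + 1) = applyGate C.gates[t] (C.stateAfter x t) := by
  rw [stateAfter, List.take_add_one, List.foldl_append, List.getElem?_eq_getElem ht]
  rfl

theorem wireFun_succ (C : CompCircuit n ℓ) {t : ℕ} (ht : t < C.gates.length) :
    C.wireFun (t + 1) = comparatorStep C.gates[t].1 C.gates[t].2 (C.wireFun t) := by
  funext w x
  simp only [wireFun, stateAfter_succ C x ht, applyGate, comparatorStep]
  split_ifs <;> rfl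

theorem not_symmGen_wireFun_of_not_uselessAt (C : CompCircuit n ℓ) {i : Fin C.gates.length}
    (hi : ¬ C.UselessAt i) :
    ¬ SymmGen (· ≤ ·) (C.wireFun i C.gates[i].1) (C.wireFun i C.gates[i].2) := by
  simp only [UselessAt, Type1UselessAt, Type2UselessAt, not_or, not_forall, not_not] at hi
  obtain ⟨⟨x₁, h₁⟩, ⟨x₂, h₂⟩⟩ := hi
  rintro (h | h)
  · have h₁₀ : (C.gateIn x₁ i).1 ≤ (C.gateIn x₁ i).2 := h x₁
    rw [h₁] at h₁₀
    exact absurd h₁₀ (by decide)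
  · have h₂₀ : (C.gateIn x₂ i).2 ≤ (C.gateIn x₂ i).1 := h x₂
    rw [h₂] at h₂₀
    exact absurd h₂₀ (by decide)

theorem card_add_two_mul_le_comparablePairCount (C : CompCircuit n ℓ)
    (h : ∀ i : Fin C.gates.length, ¬ C.UselessAt i) :
    ∀ t ≤ C.gates.length, ℓ + 2 * t ≤ comparablePairCount (C.wireFun t)
  | 0, _ => by simpa using card_le_comparablePairCount (C.wireFun 0)
  | t + 1, ht => by
    have hlt : t < C.gates.length := ht
    have hne : C.gates[t].1 ≠ C.gates[t].2 := C.distinct _ (List.getElem_mem hlt)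
    rw [C.wireFun_succ hlt]
    have hstep := comparablePairCount_add_two_le (C.wireFun t) hne
      (C.not_symmGen_wireFun_of_not_uselessAt (h ⟨t, hlt⟩))
    have ih := C.card_add_two_mul_le_comparablePairCount h t hlt.le
    omega

end CompCircuit

/-- If every gate of a comparator circuit with `ℓ` wires and `s` gates is
useful (i.e. not useless), then `s ≤ ℓ·(ℓ−1)/2`. -/
theorem useful_gates_le {n ℓ : ℕ} (C : CompCircuit n ℓ)
    (h : ∀ i : Fin C.gates.length, ¬ C.UselessAt i) :
    C.gates.length ≤ ℓ * (ℓ - 1) / 2 := by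
  have hgrow := C.card_add_two_mul_le_comparablePairCount h C.gates.length le_rfl
  have hbound := comparablePairCount_le_card_mul_card (C.wireFun C.gates.length)
  rw [Fintype.card_fin] at hbound
  rw [Nat.le_div_iff_mul_le two_pos, Nat.mul_sub_one]
  omega
end

section
/- For every n ≥ 1, the parity function PARITY_n : {0,1}^n → {0,1}, which maps (a_1,...,a_n) to a_1 ⊕ a_2 ⊕ ... ⊕ a_n, is computable by a comparator circuit with at most 2n wires and at most 4n gates. -/
namespace CompCircuit

variable {m ℓ : ℕ}

lemma ag_left (p q : Fin ℓ) (v : Fin ℓ → Bool) :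
    applyGate (p, q) v p = (v p && v q) := by simp [applyGate]

lemma ag_right (p q : Fin ℓ) (v : Fin ℓ → Bool) (h : q ≠ p) :
    applyGate (p, q) v q = (v p || v q) := by simp [applyGate, h]

lemma ag_other (p q r : Fin ℓ) (v : Fin ℓ → Bool) (h1 : r ≠ p) (h2 : r ≠ q) :
    applyGate (p, q) v r = v r := by simp [applyGate, h1, h2]

end CompCircuit

namespace ParityAux

/-- wire index, with mod to avoid proof obligations -/
def w (n i : ℕ) : Fin (2*(n+1)) := ⟨i % (2*(n+1)), Nat.mod_lt _ (by omega)⟩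

lemma w_val (n i : ℕ) (h : i < 2*(n+1)) : (w n i).val = i := Nat.mod_eq_of_lt h

lemma w_ne (n : ℕ) {i j : ℕ} (hi : i < 2*(n+1)) (hj : j < 2*(n+1)) (h : i ≠ j) :
    w n i ≠ w n j := by
  intro he
  exact h ((w_val n i hi).symm.trans ((congrArg Fin.val he).trans (w_val n j hj)))

def NN (k : ℕ) : ℕ := if k = 0 then 1 else 2*k
def PP (k : ℕ) : ℕ := if k = 0 then 0 else NN (k-1)

lemma PP_lt_NN (k : ℕ) : PP k < NN k := by
  rcases k with _ | k
  · simp [PP, NN]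
  · rcases k with _ | k <;> simp [PP, NN] <;> omega

lemma NN_le (k : ℕ) : NN k ≤ 2*k+1 := by
  rcases k with _ | k <;> simp [NN] <;> omega

def step (n j : ℕ) : List (Fin (2*(n+1)) × Fin (2*(n+1))) :=
  [(w n (PP j), w n (2*j+3)), (w n (NN j), w n (2*j+2)),
   (w n (PP j), w n (NN j)), (w n (2*j+2), w n (2*j+3))]

def circ (n : ℕ) : CompCircuit (n+1) (2*(n+1)) where
  label := fun j => (⟨j.val / 2, by omega⟩, decide (j.val % 2 = 1))
  gates := (List.range n).flatMap (step n)
  distinct := by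
    intro g hg
    rw [List.mem_flatMap] at hg
    obtain ⟨j, hj, hgj⟩ := hg
    rw [List.mem_range] at hj
    have h1 := PP_lt_NN j
    have h2 := NN_le j
    simp only [step, List.mem_cons, List.mem_singleton, List.not_mem_nil, or_false] at hgj
    rcases hgj with h | h | h | h <;> subst h <;>
      exact w_ne n (by omega) (by omega) (by omega)
  out := w n (PP n)

/-- extension of input to ℕ -/
def ext (n : ℕ) (x : Fin (n+1) → Bool) (i : ℕ) : Bool :=
  if h : i < n+1 then x ⟨i, h⟩ else false

/-- parity of x_0 .. x_k -/
def par (n : ℕ) (x : Fin (n+1) → Bool) : ℕ → Bool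
  | 0 => ext n x 0
  | k+1 => xor (par n x k) (ext n x (k+1))

lemma init_w (n : ℕ) (x : Fin (n+1) → Bool) (i : ℕ) (h : i < 2*(n+1)) :
    (circ n).init x (w n i) =
      (if i % 2 = 1 then !(ext n x (i/2)) else ext n x (i/2)) := by
  have hi2 : i / 2 < n + 1 := by omega
  simp only [CompCircuit.init, CompCircuit.litVal, circ, w_val n i h, ext,
    decide_eq_true_eq, hi2, dif_pos]

def state (n : ℕ) (x : Fin (n+1) → Bool) (j : ℕ) : Fin (2*(n+1)) → Bool :=
  ((List.range j).flatMap (step n)).foldl (fun v g => CompCircuit.applyGate g v)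
    ((circ n).init x)

lemma invariant (n : ℕ) (x : Fin (n+1) → Bool) :
    ∀ j, j ≤ n →
      state n x j (w n (PP j)) = par n x j ∧
      state n x j (w n (NN j)) = !(par n x j) ∧
      ∀ i, 2*j+2 ≤ i → i < 2*(n+1) → state n x j (w n i) = (circ n).init x (w n i) := by
  intro j
  induction j with
  | zero =>
    intro _
    refine ⟨?_, ?_, fun i _ _=> rfl⟩
    · show (circ n).init x (w n (PP 0)) = par n x 0
      rw [show PP 0 = 0 from rfl, init_w n x 0 (by omega)]
      simp [par]
    · show (circ n).init x (w n (NN 0)) = !(par n x 0)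
      rw [show NN 0 = 1 from rfl, init_w n x 1 (by omega)]
      simp [par]
  | succ j ih =>
    intro hj
    obtain ⟨hva, hvb, hfresh⟩ := ih (by omega)
    have h1 := PP_lt_NN j
    have h2 := NN_le j
    set v0 := state n x j with hv0
    set a := w n (PP j)
    set b := w n (NN j)
    set c := w n (2*j+2)
    set d := w n (2*j+3)
    have hab : a ≠ b := w_ne n (by omega) (by omega) (by omega)
    have hba : b ≠ a := hab.symm
    have hac : a ≠ c := w_ne n (by omega) (by omega) (by omega)
    have hca : c ≠ a := hac.symm
    have had : a ≠ d := w_ne n (by omega) (by omega) (by omega)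
    have hda : d ≠ a := had.symm
    have hbc : b ≠ c := w_ne n (by omega) (by omega) (by omega)
    have hcb : c ≠ b := hbc.symm
    have hbd : b ≠ d := w_ne n (by omega) (by omega) (by omega)
    have hdb : d ≠ b := hbd.symm
    have hcd : c ≠ d := w_ne n (by omega) (by omega) (by omega)
    have hdc : d ≠ c := hcd.symm
    have hvc : v0 c = ext n x (j+1) := by
      rw [hfresh (2*j+2) (by omega) (by omega), init_w n x _ (by omega)]
      have e1 : (2*j+2) % 2 = 0 := by omega
      have e2 : (2*j+2) / 2 = j+1 := by omega
      rw [e1, e2]; simp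
    have hvd : v0 d = !(ext n x (j+1)) := by
      rw [hfresh (2*j+3) (by omega) (by omega), init_w n x _ (by omega)]
      have e1 : (2*j+3) % 2 = 1 := by omega
      have e2 : (2*j+3) / 2 = j+1 := by omega
      rw [e1, e2]; simp
    have hstep : state n x (j+1) =
        CompCircuit.applyGate (c, d) (CompCircuit.applyGate (a, b)
          (CompCircuit.applyGate (b, c) (CompCircuit.applyGate (a, d) v0))) := by
      rw [state, List.range_succ, List.flatMap_append, List.foldl_append]
      rfl
    have e1 : state n x (j+1) b = ((v0 a && v0 d) || (v0 b && v0 c)) := by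
      rw [hstep, CompCircuit.ag_other _ _ _ _ hbc hbd,
        CompCircuit.ag_right _ _ _ hba,
        CompCircuit.ag_other _ _ _ _ hab hac, CompCircuit.ag_left,
        CompCircuit.ag_left, CompCircuit.ag_other _ _ _ _ hba hbd,
        CompCircuit.ag_other _ _ _ _ hca hcd]
    have e2 : state n x (j+1) c = ((v0 b || v0 c) && (v0 a || v0 d)) := by
      rw [hstep, CompCircuit.ag_left,
        CompCircuit.ag_other _ _ _ _ hca hcb,
        CompCircuit.ag_other _ _ _ _ hda hdb,
        CompCircuit.ag_right _ _ _ hcb,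
        CompCircuit.ag_other _ _ _ _ hdb hdc,
        CompCircuit.ag_other _ _ _ _ hba hbd,
        CompCircuit.ag_other _ _ _ _ hca hcd,
        CompCircuit.ag_right _ _ _ hda]
    refine ⟨?_, ?_, ?_⟩
    · have hp : PP (j+1) = NN j := by simp [PP]
      rw [hp]
      show state n x (j+1) b = par n x (j+1)
      rw [e1, hva, hvb, hvc, hvd]
      show _ = xor (par n x j) (ext n x (j+1))
      cases par n x j <;> cases ext n x (j+1) <;> rfl
    · have hq : NN (j+1) = 2*j+2 := by simp [NN]; omega
      rw [hq]
      show state n x (j+1) c = !(par n x (j+1))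
      rw [e2, hva, hvb, hvc, hvd]
      show _ = !(xor (par n x j) (ext n x (j+1)))
      cases par n x j <;> cases ext n x (j+1) <;> rfl
    · intro i hi hi2
      have hra : w n i ≠ a := w_ne n (by omega) (by omega) (by omega)
      have hrb : w n i ≠ b := w_ne n (by omega) (by omega) (by omega)
      have hrc : w n i ≠ c := w_ne n (by omega) (by omega) (by omega)
      have hrd : w n i ≠ d := w_ne n (by omega) (by omega) (by omega)
      rw [hstep, CompCircuit.ag_other _ _ _ _ hrc hrd,
        CompCircuit.ag_other _ _ _ _ hra hrb,
        CompCircuit.ag_other _ _ _ _ hrb hrc,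
        CompCircuit.ag_other _ _ _ _ hra hrd]
      exact hfresh i (by omega) hi2

lemma foldr_xor_eq (l : List Bool) (cb : Bool) :
    l.foldr xor cb = xor (l.foldr xor false) cb := by
  induction l with
  | nil => simp
  | cons hd tl ih => simp [ih, Bool.xor_assoc]

lemma par_eq (n : ℕ) (x : Fin (n+1) → Bool) (k : ℕ) :
    par n x k = ((List.range (k+1)).map (ext n x)).foldr Bool.xor false := by
  induction k with
  | zero => rw [show List.range 1 = [0] from rfl]; simp [par]
  | succ k ih =>
    rw [show k+1+1 = (k+1)+1 from rfl, List.range_succ, List.map_append,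
      List.foldr_append]
    simp only [List.map_cons, List.map_nil, List.foldr_cons, List.foldr_nil]
    rw [foldr_xor_eq, ← ih]
    show par n x (k+1) = _
    rw [show par n x (k+1) = xor (par n x k) (ext n x (k+1)) from rfl]
    cases par n x k <;> cases ext n x (k+1) <;> rfl

lemma ofFn_eq (n : ℕ) (x : Fin (n+1) → Bool) :
    List.ofFn x = (List.range (n+1)).map (ext n x) := by
  apply List.ext_getElem
  · simp
  · intro i h1 h2
    simp only [List.getElem_ofFn, List.getElem_map, List.getElem_range, ext]
    rw [dif_pos (by simpa using h1)]

lemma gates_len (n : ℕ) : ∀ m, ((List.range m).flatMap (step n)).length = 4*m := by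
  intro m
  induction m with
  | zero => simp
  | succ k ih =>
    rw [List.range_succ, List.flatMap_append, List.length_append, ih]
    simp [step]; omega

lemma circ_eval (n : ℕ) (x : Fin (n+1) → Bool) :
    (circ n).eval x = (List.ofFn x).foldr Bool.xor false := by
  have hrun : (circ n).eval x = state n x n (w n (PP n)) := rfl
  rw [hrun, (invariant n x n le_rfl).1, par_eq, ofFn_eq]

end ParityAux


/-- For every `n ≥ 1`, the parity function on `n` bits is computable by a
comparator circuit with at most `2n` wires and at most `4n` gates. -/
theorem parity_small_comparator_circuit (n : ℕ) (hn : 1 ≤ n) :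
    ∃ ℓ : ℕ, ℓ ≤ 2 * n ∧ ∃ C : CompCircuit n ℓ, C.gates.length ≤ 4 * n ∧
      ∀ a : Fin n → Bool, C.eval a = (List.ofFn a).foldr Bool.xor false := by

  obtain ⟨m, rfl⟩ : ∃ m, n = m + 1 := ⟨n - 1, by omega⟩
  refine ⟨2*(m+1), by omega, ParityAux.circ m, ?_, ParityAux.circ_eval m⟩
  show ((List.range m).flatMap (ParityAux.step m)).length ≤ 4*(m+1)
  rw [ParityAux.gates_len m m]; omega
end

section
/- For all integers n ≥ 1 and ℓ ≥ 1, the number of distinct Boolean functions f : {0,1}^n → {0,1} computable by comparator circuits on n variables with at most ℓ wires is at most (2n)^ℓ · (ℓ² + 1)^{ℓ²} · ℓ. -/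
/-!
A gate whose inputs are never `(1, 0)` acts as the identity, and one whose inputs are never
`(0, 1)` merely swaps its two wires, which can be absorbed by relabelling the wires of the rest
of the circuit. Every other gate strictly enlarges the set of ordered pairs of wires `(u, v)`
with `u ≤ v` pointwise as functions of the input, and there are only `ℓ²` such pairs. Hence
every function computed with `ℓ` wires is computed by a circuit on exactly `ℓ` wires (pad with
idle wires) with at most `ℓ²` gates, and such a circuit is described by its `ℓ` literals, a word
of `ℓ²` optional gates and its output wire.
-/

section LeRel

variable {ι α : Type*}

section LE

variable [LE α]

def leRel (F : ι → α) : Set (ι × ι) := {q | F q.1 ≤ F q.2}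

@[simp] lemma mem_leRel {F : ι → α} {q : ι × ι} : q ∈ leRel F ↔ F q.1 ≤ F q.2 := Iff.rfl

lemma ncard_leRel_le [Finite ι] (F : ι → α) : (leRel F).ncard ≤ Nat.card ι ^ 2 := by
  simpa [sq] using Set.ncard_le_card (leRel F)

lemma ncard_leRel_comp (F : ι → α) (σ : Equiv.Perm ι) :
    (leRel (F ∘ σ)).ncard = (leRel F).ncard :=
  Set.ncard_preimage_of_injective_subset_range (s := leRel F) (f := Prod.map σ σ)
    (σ.injective.prodMap σ.injective) (by simp [(σ.surjective.prodMap σ.surjective).range_eq])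

end LE

variable [Lattice α] [DecidableEq ι]

def sortPair (a b : ι) (F : ι → α) : ι → α :=
  fun w => if w = a then F a ⊓ F b else if w = b then F a ⊔ F b else F w

variable {F : ι → α} {a b : ι}

lemma sortPair_le_of_le_of_le {u v : ι} (huv : F u ≤ F v)
    (huv' : F (Equiv.swap a b u) ≤ F (Equiv.swap a b v)) :
    sortPair a b F u ≤ sortPair a b F v := by
  simp only [sortPair, Equiv.swap_apply_def] at *
  split_ifs at * <;> subst_vars <;> simp_all [le_sup_of_le_left, inf_le_of_left_le]

lemma sortPair_le_or {u v : ι} (huv : F u ≤ F v) :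
    sortPair a b F u ≤ sortPair a b F v ∨
      sortPair a b F (Equiv.swap a b u) ≤ sortPair a b F (Equiv.swap a b v) := by
  simp only [sortPair, Equiv.swap_apply_def] at *
  split_ifs at * <;> subst_vars <;>
    simp_all [le_sup_of_le_left, le_sup_of_le_right, inf_le_of_left_le, inf_le_of_right_le]

lemma ncard_leRel_lt_sortPair [Finite ι] (hab : ¬F a ≤ F b) (hba : ¬F b ≤ F a) :
    (leRel F).ncard < (leRel (sortPair a b F)).ncard := by
  set τ := Equiv.swap a b
  set G := sortPair a b F
  -- `|R ∪ τR| + |R ∩ τR| = 2|R|` for `R = leRel F`, `τR = leRel (F ∘ τ)`, and likewise for `G`;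
  -- both the union and the intersection grow, the union strictly, by `(a, b)`.
  have hinter : leRel F ∩ leRel (F ∘ τ) ⊆ leRel G ∩ leRel (G ∘ τ) := by
    rintro ⟨u, v⟩ ⟨huv, huv' : F (τ u) ≤ F (τ v)⟩
    refine ⟨sortPair_le_of_le_of_le huv huv', sortPair_le_of_le_of_le huv' ?_⟩
    simpa [τ] using huv
  have hunion : leRel F ∪ leRel (F ∘ τ) ⊂ leRel G ∪ leRel (G ∘ τ) := by
    refine (Set.ssubset_iff_of_subset ?_).2 ⟨(a, b), Or.inl ?_, ?_⟩
    · rintro ⟨u, v⟩ (huv | huv)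
      · exact sortPair_le_or huv
      · simpa [τ, or_comm] using sortPair_le_or (F := F) (a := a) (b := b) huv
    · have hne : b ≠ a := by rintro rfl; exact hab le_rfl
      simp [G, sortPair, hne]
    · simp [τ, hab, hba]
  have hF := Set.ncard_union_add_ncard_inter (leRel F) (leRel (F ∘ τ))
  have hG := Set.ncard_union_add_ncard_inter (leRel G) (leRel (G ∘ τ))
  rw [ncard_leRel_comp] at hF hG
  have := Set.ncard_lt_ncard hunion
  have := Set.ncard_le_ncard hinter
  omega

end LeRel

theorem List.reduceOption_ofFn_getElem? {α : Type*} (L : List α) {m : ℕ} (h : L.length ≤ m) :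
    (List.ofFn fun i : Fin m => L[(i : ℕ)]?).reduceOption = L := by
  induction L generalizing m with
  | nil => simp
  | cons a L ih =>
    cases m with
    | zero => simp at h
    | succ m =>
      simp [List.ofFn_succ, List.reduceOption_cons_of_some, ih (m := m) (by simpa using h)]

namespace CompCircuit

variable {n ℓ ℓ' : ℕ}

def runGates (L : List (Fin ℓ × Fin ℓ)) (v : Fin ℓ → Bool) : Fin ℓ → Bool :=
  L.foldl (fun v g => applyGate g v) v

@[simp] lemma runGates_cons (g : Fin ℓ × Fin ℓ) (L : List (Fin ℓ × Fin ℓ)) (v : Fin ℓ → Bool) :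
    runGates (g :: L) v = runGates L (applyGate g v) := rfl

lemma runGates_map_comp {e : Fin ℓ' → Fin ℓ} (he : Function.Injective e)
    (L : List (Fin ℓ' × Fin ℓ')) (v : Fin ℓ → Bool) :
    runGates (L.map (Prod.map e e)) v ∘ e = runGates L (v ∘ e) := by
  induction L generalizing v with
  | nil => rfl
  | cons g L ih =>
    have : applyGate (Prod.map e e g) v ∘ e = applyGate g (v ∘ e) := by
      funext w; simp [applyGate, he.eq_iff]
    simp only [List.map_cons, runGates_cons, ih, this]

lemma applyGate_eq_self {g : Fin ℓ × Fin ℓ} {v : Fin ℓ → Bool} (h : v g.1 ≤ v g.2) :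
    applyGate g v = v := by
  funext w
  simp only [applyGate]
  split_ifs <;> subst_vars <;> revert h <;> cases v g.1 <;> cases v g.2 <;> simp

lemma applyGate_eq_comp_swap {g : Fin ℓ × Fin ℓ} {v : Fin ℓ → Bool} (h : v g.2 ≤ v g.1) :
    applyGate g v = v ∘ Equiv.swap g.1 g.2 := by
  funext w
  simp only [applyGate, Function.comp_apply, Equiv.swap_apply_def]
  split_ifs <;> subst_vars <;> revert h <;> cases v g.1 <;> cases v g.2 <;> simp

lemma swap_applyGate {X : Type*} (g : Fin ℓ × Fin ℓ) (V : X → Fin ℓ → Bool) :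
    Function.swap (fun x => applyGate g (V x)) = sortPair g.1 g.2 (Function.swap V) := by
  funext w x
  simp only [Function.swap, applyGate, sortPair]
  split_ifs <;> rfl

theorem exists_runGates_eq_comp_perm {X : Type*} (L : List (Fin ℓ × Fin ℓ))
    (V : X → Fin ℓ → Bool) :
    ∃ (L' : List (Fin ℓ × Fin ℓ)) (π : Equiv.Perm (Fin ℓ)), (∀ g ∈ L', g.1 ≠ g.2) ∧
      L'.length + (leRel (Function.swap V)).ncard ≤ ℓ ^ 2 ∧
      ∀ x, runGates L' (V x) = runGates L (V x) ∘ π := by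
  induction L generalizing V with
  | nil => exact ⟨[], 1, by simp, by simpa using ncard_leRel_le (Function.swap V), by simp⟩
  | cons g L ih =>
    by_cases h₁ : Function.swap V g.1 ≤ Function.swap V g.2
    · obtain ⟨L', π, hL', hlen, hrun⟩ := ih V
      refine ⟨L', π, hL', hlen, fun x => ?_⟩
      rw [hrun, runGates_cons, applyGate_eq_self (h₁ x)]
    by_cases h₂ : Function.swap V g.2 ≤ Function.swap V g.1
    · set τ := Equiv.swap g.1 g.2
      obtain ⟨L', π, hL', hlen, hrun⟩ := ih fun x => V x ∘ τ
      refine ⟨L'.map (Prod.map τ τ), τ.trans π, ?_, ?_, fun x => ?_⟩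
      · simp only [List.mem_map]
        rintro _ ⟨p, hp, rfl⟩
        exact τ.injective.ne (hL' p hp)
      · rwa [show Function.swap (fun x => V x ∘ τ) = Function.swap V ∘ τ from rfl,
          ncard_leRel_comp, ← List.length_map (Prod.map τ τ)] at hlen
      · rw [runGates_cons, applyGate_eq_comp_swap (h₂ x), Equiv.coe_trans, ← Function.comp_assoc,
          ← hrun, ← runGates_map_comp τ.injective]
        funext w
        simp [τ]
    · obtain ⟨L', π, hL', hlen, hrun⟩ := ih fun x => applyGate g (V x)
      have hlt := ncard_leRel_lt_sortPair h₁ h₂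
      rw [← swap_applyGate] at hlt
      refine ⟨g :: L', π, ?_, ?_, fun x => ?_⟩
      · intro p hp
        rcases List.mem_cons.1 hp with rfl | hp
        · intro heq; exact h₁ (heq ▸ le_rfl)
        · exact hL' p hp
      · simp only [List.length_cons]; omega
      · rw [runGates_cons, hrun, runGates_cons]

lemma eval_eq_runGates (C : CompCircuit n ℓ) (x : Fin n → Bool) :
    C.eval x = runGates C.gates (C.init x) C.out := rfl

theorem exists_eval_eq_of_length_le_sq (C : CompCircuit n ℓ) :
    ∃ D : CompCircuit n ℓ, D.gates.length ≤ ℓ ^ 2 ∧ D.eval = C.eval := by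
  obtain ⟨L, π, hL, hlen, hrun⟩ := exists_runGates_eq_comp_perm C.gates C.init
  refine ⟨⟨C.label, L, hL, π.symm C.out⟩, (Nat.le_add_right _ _).trans hlen, funext fun x => ?_⟩
  exact (congrFun (hrun x) _).trans (congrArg _ (π.apply_symm_apply C.out))

/-- The extra wires carry no gates, so their literal is irrelevant. -/
def castLE (C : CompCircuit n ℓ') (h : ℓ' ≤ ℓ) : CompCircuit n ℓ where
  label w := if hw : (w : ℕ) < ℓ' then C.label ⟨w, hw⟩ else C.label C.out
  gates := C.gates.map (Prod.map (Fin.castLE h) (Fin.castLE h))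
  distinct := by
    simp only [List.mem_map]
    rintro _ ⟨g, hg, rfl⟩
    exact (Fin.castLE_injective h).ne (C.distinct g hg)
  out := Fin.castLE h C.out

lemma eval_castLE (C : CompCircuit n ℓ') (h : ℓ' ≤ ℓ) : (C.castLE h).eval = C.eval := by
  funext x
  have hinit : (C.castLE h).init x ∘ Fin.castLE h = C.init x := by
    funext w; simp [init, castLE]
  rw [eval_eq_runGates, eval_eq_runGates, ← hinit, ← runGates_map_comp (Fin.castLE_injective h)]
  rfl

theorem ncard_setOf_eval_le (m : ℕ) :
    {f : (Fin n → Bool) → Bool | ∃ C : CompCircuit n ℓ, C.gates.length ≤ m ∧ C.eval = f}.ncard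
      ≤ (2 * n) ^ ℓ * (ℓ ^ 2 + 1) ^ m * ℓ := by
  let decode : (Fin ℓ → Fin n × Bool) × (Fin m → Option (Fin ℓ × Fin ℓ)) × Fin ℓ →
      (Fin n → Bool) → Bool :=
    fun c x => runGates (List.ofFn c.2.1).reduceOption (fun w => litVal x (c.1 w)) c.2.2
  have hsub : {f | ∃ C : CompCircuit n ℓ, C.gates.length ≤ m ∧ C.eval = f} ⊆ Set.range decode := by
    rintro _ ⟨C, hC, rfl⟩
    refine ⟨(C.label, fun i => C.gates[(i : ℕ)]?, C.out), funext fun x => ?_⟩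
    simp only [decode, List.reduceOption_ofFn_getElem? C.gates hC]
    rfl
  calc _ ≤ (Set.range decode).ncard := Set.ncard_le_ncard hsub
    _ ≤ Nat.card ((Fin ℓ → Fin n × Bool) × (Fin m → Option (Fin ℓ × Fin ℓ)) × Fin ℓ) := by
      rw [← Nat.card_coe_set_eq]; exact Finite.card_range_le decode
    _ = (2 * n) ^ ℓ * (ℓ ^ 2 + 1) ^ m * ℓ := by
      simp only [Nat.card_eq_fintype_card, Fintype.card_prod, Fintype.card_fun, Fintype.card_option,
        Fintype.card_fin, Fintype.card_bool]
      ring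

end CompCircuit

theorem count_functions_small_circuits_general (n ℓ : ℕ) :
    {f : (Fin n → Bool) → Bool |
        ∃ ℓ' ≤ ℓ, ∃ C : CompCircuit n ℓ', ∀ x, C.eval x = f x}.ncard
      ≤ (2 * n) ^ ℓ * (ℓ ^ 2 + 1) ^ (ℓ ^ 2) * ℓ := by
  refine (Set.ncard_le_ncard ?_).trans (CompCircuit.ncard_setOf_eval_le (ℓ ^ 2))
  rintro f ⟨ℓ', hℓ', C, hC⟩
  obtain ⟨D, hD, hDC⟩ := (C.castLE hℓ').exists_eval_eq_of_length_le_sq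
  exact ⟨D, hD, by rw [hDC, CompCircuit.eval_castLE]; exact funext hC⟩

/-- For all `n ≥ 1` and `ℓ ≥ 1`, the number of distinct Boolean functions on
`n` bits computable by comparator circuits with at most `ℓ` wires is at most
`(2n)^ℓ · (ℓ² + 1)^(ℓ²) · ℓ`. -/
theorem count_functions_small_circuits (n ℓ : ℕ) (hn : 1 ≤ n) (hℓ : 1 ≤ ℓ) :
    {f : (Fin n → Bool) → Bool |
        ∃ ℓ' ≤ ℓ, ∃ C : CompCircuit n ℓ', ∀ x, C.eval x = f x}.ncard
      ≤ (2 * n) ^ ℓ * (ℓ ^ 2 + 1) ^ (ℓ ^ 2) * ℓ :=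
  count_functions_small_circuits_general n ℓ
end

section
/- Every Boolean function computed by a De Morgan formula with L leaves is computable by a comparator circuit with L wires and at most L − 1 gates. -/
/-- A De Morgan formula on `n` variables: leaves are literals (a variable or its negation),
internal nodes are labelled by `∧` or `∨`. -/
inductive DMFormula (n : ℕ) : Type
  | lit (i : Fin n) (neg : Bool) : DMFormula n
  | and (F G : DMFormula n) : DMFormula n
  | or (F G : DMFormula n) : DMFormula n

namespace DMFormula

/-- Evaluation of a De Morgan formula. -/
def eval {n : ℕ} : DMFormula n → (Fin n → Bool) → Bool
  | lit i neg, x => if neg then !(x i) else x i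
  | and F G, x => F.eval x && G.eval x
  | or F G, x => F.eval x || G.eval x

/-- The number of leaves of a De Morgan formula. -/
def leaves {n : ℕ} : DMFormula n → ℕ
  | lit _ _ => 1
  | and F G => F.leaves + G.leaves
  | or F G => F.leaves + G.leaves

end DMFormula

namespace CompCircuit

variable {n ℓ₁ ℓ₂ : ℕ}

def mapGates {ℓ ℓ' : ℕ} (f : Fin ℓ → Fin ℓ') (gs : List (Fin ℓ × Fin ℓ)) :
    List (Fin ℓ' × Fin ℓ') := gs.map fun g => (f g.1, f g.2)

lemma foldl_map_inj {ℓ ℓ' : ℕ} (f : Fin ℓ → Fin ℓ') (hf : Function.Injective f)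
    (gs : List (Fin ℓ × Fin ℓ)) (v : Fin ℓ' → Bool) (w : Fin ℓ) :
    (mapGates f gs).foldl (fun v g => applyGate g v) v (f w)
      = gs.foldl (fun v g => applyGate g v) (fun u => v (f u)) w := by
  induction gs generalizing v with
  | nil => rfl
  | cons g gs ih =>
      simp only [mapGates] at ih ⊢
      simp only [List.map_cons, List.foldl_cons]
      rw [ih]
      rw [show (fun u => applyGate (f g.1, f g.2) v (f u))
            = applyGate g (fun u => v (f u)) from funext fun u => by
          simp [applyGate, hf.eq_iff]]

lemma foldl_map_notin {ℓ ℓ' : ℕ} (f : Fin ℓ → Fin ℓ')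
    (gs : List (Fin ℓ × Fin ℓ)) (v : Fin ℓ' → Bool) (w : Fin ℓ')
    (hw : ∀ u, f u ≠ w) :
    (mapGates f gs).foldl (fun v g => applyGate g v) v w = v w := by
  induction gs generalizing v with
  | nil => rfl
  | cons g gs ih =>
      simp only [mapGates] at ih ⊢
      simp only [List.map_cons, List.foldl_cons]
      rw [ih]
      simp [applyGate, fun u => (hw u).symm]

lemma castAdd_val_lt (w : Fin ℓ₁) : ((Fin.castAdd ℓ₂ w : Fin (ℓ₁ + ℓ₂)) : ℕ) < ℓ₁ := w.2

lemma natAdd_ne_castAdd (w : Fin ℓ₂) (u : Fin ℓ₁) :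
    Fin.natAdd ℓ₁ w ≠ Fin.castAdd ℓ₂ u := by
  intro h
  have := congrArg Fin.val h
  simp [Fin.natAdd, Fin.castAdd] at this
  omega

def combine (C₁ : CompCircuit n ℓ₁) (C₂ : CompCircuit n ℓ₂) (o : Fin (ℓ₁ + ℓ₂)) :
    CompCircuit n (ℓ₁ + ℓ₂) where
  label := Fin.addCases C₁.label C₂.label
  gates := mapGates (Fin.castAdd ℓ₂) C₁.gates ++ mapGates (Fin.natAdd ℓ₁) C₂.gates
            ++ [(Fin.castAdd ℓ₂ C₁.out, Fin.natAdd ℓ₁ C₂.out)]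
  distinct := by
    intro g hg
    simp only [List.mem_append, List.mem_singleton, mapGates, List.mem_map] at hg
    rcases hg with (⟨g', hg', rfl⟩ | ⟨g', hg', rfl⟩) | rfl
    · simpa [Fin.castAdd, Fin.ext_iff] using
        Fin.val_ne_of_ne (C₁.distinct g' hg')
    · simpa [Fin.natAdd, Fin.ext_iff] using
        fun h => C₂.distinct g' hg' (Fin.ext h)
    · exact (natAdd_ne_castAdd C₂.out C₁.out ∘ Eq.symm)
  out := o

lemma combine_run (C₁ : CompCircuit n ℓ₁) (C₂ : CompCircuit n ℓ₂)
    (o : Fin (ℓ₁ + ℓ₂)) (x : Fin n → Bool) :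
    (combine C₁ C₂ o).run x (Fin.castAdd ℓ₂ C₁.out) = (C₁.eval x && C₂.eval x) ∧
    (combine C₁ C₂ o).run x (Fin.natAdd ℓ₁ C₂.out) = (C₁.eval x || C₂.eval x) := by
  have hlab₁ : ∀ w : Fin ℓ₁,
      (combine C₁ C₂ o).init x (Fin.castAdd ℓ₂ w) = C₁.init x w := by
    intro w; simp [combine, init, Fin.addCases_left]
  have hlab₂ : ∀ w : Fin ℓ₂,
      (combine C₁ C₂ o).init x (Fin.natAdd ℓ₁ w) = C₂.init x w := by
    intro w; simp [combine, init, Fin.addCases_right]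
  set v₀ := (combine C₁ C₂ o).init x with hv₀
  set A := mapGates (Fin.castAdd ℓ₂) C₁.gates with hA
  set B := mapGates (Fin.natAdd ℓ₁) C₂.gates with hB
  set v₁ := A.foldl (fun v g => applyGate g v) v₀ with hv₁
  set v₂ := B.foldl (fun v g => applyGate g v) v₁ with hv₂
  have h₁ : ∀ w : Fin ℓ₁, v₁ (Fin.castAdd ℓ₂ w) = C₁.run x w := by
    intro w
    rw [hv₁, hA, foldl_map_inj _ (Fin.castAdd_injective _ _)]
    rw [show (fun u => v₀ (Fin.castAdd ℓ₂ u)) = C₁.init x from funext hlab₁]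
    rfl
  have h₁' : ∀ w : Fin ℓ₂, v₁ (Fin.natAdd ℓ₁ w) = C₂.init x w := by
    intro w
    rw [hv₁, hA, foldl_map_notin _ _ _ _ (fun u => natAdd_ne_castAdd w u ∘ Eq.symm)]
    exact hlab₂ w
  have h₂ : ∀ w : Fin ℓ₂, v₂ (Fin.natAdd ℓ₁ w) = C₂.run x w := by
    intro w
    rw [hv₂, hB, foldl_map_inj _ (fun a b h => Fin.ext (by
      have := congrArg Fin.val h; simp [Fin.natAdd] at this; exact this))]
    rw [show (fun u => v₁ (Fin.natAdd ℓ₁ u)) = C₂.init x from funext h₁']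
    rfl
  have h₂' : ∀ w : Fin ℓ₁, v₂ (Fin.castAdd ℓ₂ w) = C₁.run x w := by
    intro w
    rw [hv₂, hB, foldl_map_notin _ _ _ _ (fun u => natAdd_ne_castAdd u w)]
    exact h₁ w
  have hrun : (combine C₁ C₂ o).run x
      = applyGate (Fin.castAdd ℓ₂ C₁.out, Fin.natAdd ℓ₁ C₂.out) v₂ := by
    show (A ++ B ++ [_]).foldl (fun v g => applyGate g v) v₀ = _
    rw [List.foldl_append, List.foldl_append]
    rfl
  rw [hrun]
  constructor
  · have h : applyGate (Fin.castAdd ℓ₂ C₁.out, Fin.natAdd ℓ₁ C₂.out) v₂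
        (Fin.castAdd ℓ₂ C₁.out)
        = (v₂ (Fin.castAdd ℓ₂ C₁.out) && v₂ (Fin.natAdd ℓ₁ C₂.out)) := by
      simp [applyGate]
    rw [h, h₂' C₁.out, h₂ C₂.out]
    rfl
  · have h : applyGate (Fin.castAdd ℓ₂ C₁.out, Fin.natAdd ℓ₁ C₂.out) v₂
        (Fin.natAdd ℓ₁ C₂.out)
        = (v₂ (Fin.castAdd ℓ₂ C₁.out) || v₂ (Fin.natAdd ℓ₁ C₂.out)) := by
      simp [applyGate, natAdd_ne_castAdd C₂.out C₁.out]
    rw [h, h₂' C₁.out, h₂ C₂.out]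
    rfl

end CompCircuit

lemma DMFormula.leaves_pos {n : ℕ} (F : DMFormula n) : 1 ≤ F.leaves := by
  induction F with
  | lit i neg => exact le_refl 1
  | and F G ihF ihG => simp [DMFormula.leaves]; omega
  | or F G ihF ihG => simp [DMFormula.leaves]; omega

/-- Every Boolean function computed by a De Morgan formula with `L` leaves is
computable by a comparator circuit with `L` wires and at most `L − 1` gates. -/
theorem demorgan_to_comparator {n : ℕ} (F : DMFormula n) :
    ∃ C : CompCircuit n F.leaves, C.gates.length ≤ F.leaves - 1 ∧
      ∀ x : Fin n → Bool, C.eval x = F.eval x := by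
  induction F with
  | lit i neg =>
      refine ⟨⟨fun _ => (i, neg), [], by simp, ⟨0, (DMFormula.lit i neg).leaves_pos⟩⟩, Nat.zero_le _, ?_⟩
      intro x
      simp [CompCircuit.eval, CompCircuit.run, CompCircuit.init, CompCircuit.litVal,
        DMFormula.eval]
  | and F G ihF ihG =>
      obtain ⟨C₁, h₁, he₁⟩ := ihF
      obtain ⟨C₂, h₂, he₂⟩ := ihG
      refine ⟨CompCircuit.combine C₁ C₂ (Fin.castAdd _ C₁.out), ?_, ?_⟩
      · have hF := F.leaves_pos; have hG := G.leaves_pos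
        simp only [CompCircuit.combine, CompCircuit.mapGates, List.length_append,
          List.length_map, List.length_singleton, DMFormula.leaves]
        omega
      · intro x
        have h := (CompCircuit.combine_run C₁ C₂ (Fin.castAdd _ C₁.out) x).1
        show (CompCircuit.combine C₁ C₂ (Fin.castAdd _ C₁.out)).run x
            (Fin.castAdd _ C₁.out) = _
        rw [h, he₁, he₂]
        rfl
  | or F G ihF ihG =>
      obtain ⟨C₁, h₁, he₁⟩ := ihF
      obtain ⟨C₂, h₂, he₂⟩ := ihG
      refine ⟨CompCircuit.combine C₁ C₂ (Fin.natAdd _ C₂.out), ?_, ?_⟩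
      · have hF := F.leaves_pos; have hG := G.leaves_pos
        simp only [CompCircuit.combine, CompCircuit.mapGates, List.length_append,
          List.length_map, List.length_singleton, DMFormula.leaves]
        omega
      · intro x
        have h := (CompCircuit.combine_run C₁ C₂ (Fin.natAdd _ C₂.out) x).2
        show (CompCircuit.combine C₁ C₂ (Fin.natAdd _ C₂.out)).run x
            (Fin.natAdd _ C₂.out) = _
        rw [h, he₁, he₂]
        rfl
end

section
/- Let n and k be integers with k dividing n and k ≤ n/6. Let Enc : {0,1}^n → {0,1}^{2^k} (coordinates indexed by z ∈ {0,1}^k) be a map such that for every function g : {0,1}^k → {0,1}, the number of x ∈ {0,1}^n with Pr_{z ∈ {0,1}^k}[g(z) = Enc(x)_z] > 1/2 + n/2^{k/4} is at most 2^{k/2}. Let S_1, ..., S_{n/k} be a partition of [n] into n/k blocks of size k, and let H be a set of functions from {0,1}^k to {0,1} with |H| ≤ 2^{n/2}. Let F₁ be a set of functions from {0,1}^n to {0,1} such that for every C ∈ F₁ there exists a block S_i with {C|ρ : ρ ∈ {0,1}^{[n]∖S_i}} ⊆ H, where C|ρ denotes the function on the variables in S_i obtained by fixing the variables outside S_i according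 to ρ. Let F₂ be a set of functions from {0,1}^{2n} to {0,1} such that for every C₀ ∈ F₂ and every x ∈ {0,1}^n, the function y ↦ C₀(x,y) belongs to F₁. Then there exists a function f : {0,1}^{2n} → {0,1} such that every C₀ ∈ F₂ satisfies Pr_{(x,y) ∈ {0,1}^n × {0,1}^n}[C₀(x,y) = f(x,y)] ≤ 1/2 + n/2^{k/4} + 2^{−n/4}. -/
open Finset

section NAhelp
variable {n k m : ℕ}

def NAmrg (E : Fin n ≃ Fin m × Fin k) (i : Fin m) (w : Fin k → Bool)
    (ρ : {i' : Fin m // i' ≠ i} → Fin k → Bool) : Fin n → Bool :=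
  fun v => if h : (E v).1 = i then w (E v).2 else ρ ⟨(E v).1, h⟩ (E v).2

def NAsplit (E : Fin n ≃ Fin m × Fin k) (i : Fin m) :
    (Fin n → Bool) ≃ (({i' : Fin m // i' ≠ i} → Fin k → Bool) × (Fin k → Bool)) where
  toFun y := (fun i' j => y (E.symm (i'.1, j)), fun j => y (E.symm (i, j)))
  invFun p := NAmrg E i p.2 p.1
  left_inv y := by
    funext v
    simp only [NAmrg]
    split_ifs with h
    · have h2 : ((i : Fin m), (E v).2) = E v := by rw [← h]
      rw [h2, Equiv.symm_apply_apply]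
    · have h2 : ((E v).1, (E v).2) = E v := rfl
      rw [h2, Equiv.symm_apply_apply]
  right_inv p := by
    obtain ⟨ρ, w⟩ := p
    simp only [NAmrg, Prod.mk.injEq]
    constructor
    · funext i' j
      simp only [Equiv.apply_symm_apply]
      rw [dif_neg i'.prop]
    · funext j
      simp

lemma NAcard_filter_prod {α β : Type*} [Fintype α] [Fintype β] (p : α → β → Prop)
    [∀ a b, Decidable (p a b)] :
    (univ.filter (fun w : α × β => p w.1 w.2)).card
      = ∑ a, (univ.filter (fun b => p a b)).card := by
  simp only [Finset.card_filter]
  rw [Fintype.sum_prod_type]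

lemma NAcard_filter_equiv {α β : Type*} [Fintype α] [Fintype β] (e : α ≃ β) (p : α → Prop)
    [DecidablePred p] [DecidablePred fun b => p (e.symm b)] :
    (univ.filter p).card = (univ.filter (fun b => p (e.symm b))).card :=
  Finset.card_equiv e (by simp)

def NApar (E : Fin n ≃ Fin m × Fin k) (y : Fin n → Bool) (j : Fin k) : Bool :=
  decide ((∑ i : Fin m, (if y (E.symm (i, j)) then (1 : ZMod 2) else 0)) = 1)

def NAcpar (i : Fin m) (ρ : {i' : Fin m // i' ≠ i} → Fin k → Bool) (j : Fin k) : Bool :=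
  decide ((∑ i' : {i' : Fin m // i' ≠ i}, (if ρ i' j then (1 : ZMod 2) else 0)) = 1)

lemma NAbool_zmod : ∀ (b : Bool) (s : ZMod 2),
    decide ((if b then (1:ZMod 2) else 0) + s = 1) = xor b (decide (s = 1)) := by decide

lemma NApar_mrg (E : Fin n ≃ Fin m × Fin k) (i : Fin m) (w : Fin k → Bool)
    (ρ : {i' : Fin m // i' ≠ i} → Fin k → Bool) (j : Fin k) :
    NApar E (NAmrg E i w ρ) j = xor (w j) (NAcpar i ρ j) := by
  classical
  have hterm : ∀ i'' : Fin m,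
      (if NAmrg E i w ρ (E.symm (i'', j)) then (1:ZMod 2) else 0)
      = if h : i'' = i then (if w j then (1:ZMod 2) else 0)
        else (if ρ ⟨i'', h⟩ j then 1 else 0) := by
    intro i''
    by_cases h : i'' = i
    · subst h; simp [NAmrg]
    · simp [NAmrg, h]
  unfold NApar NAcpar
  rw [Finset.sum_congr rfl fun i'' _ => hterm i'']
  rw [← Finset.add_sum_erase _ _ (Finset.mem_univ i)]
  rw [dif_pos rfl]
  have hsub : ∑ i'' ∈ univ.erase i, (if h : i'' = i then (if w j then (1:ZMod 2) else 0)
        else (if ρ ⟨i'', h⟩ j then 1 else 0))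
      = ∑ i' : {i' : Fin m // i' ≠ i}, (if ρ i' j then (1:ZMod 2) else 0) := by
    rw [Finset.sum_subtype (p := fun i'' => i'' ≠ i) (univ.erase i)
      (fun x => by simp [Finset.mem_erase])
      (fun i'' => if h : i'' = i then (if w j then (1:ZMod 2) else 0)
        else (if ρ ⟨i'', h⟩ j then 1 else 0))]
    exact Finset.sum_congr rfl fun a _ => by simp [a.prop]
  rw [hsub, NAbool_zmod]

def NAxorE (c : Fin k → Bool) : (Fin k → Bool) ≃ (Fin k → Bool) where
  toFun w := fun j => xor (w j) (c j)
  invFun w := fun j => xor (w j) (c j)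
  left_inv w := by funext j; simp
  right_inv w := by funext j; simp

lemma NAcard_shift {k : ℕ} (h e : (Fin k → Bool) → Bool) (c : Fin k → Bool) :
    (univ.filter (fun w => h w = e (fun j => xor (w j) (c j)))).card
      = (univ.filter (fun z => h (fun j => xor (z j) (c j)) = e z)).card := by
  classical
  rw [NAcard_filter_equiv (NAxorE c) (fun w => h w = e (fun j => xor (w j) (c j)))]
  congr 1
  apply Finset.filter_congr
  intro z _
  have h1 : ((NAxorE c).symm z) = fun j => xor (z j) (c j) := rfl
  have h2 : (fun j => xor (xor (z j) (c j)) (c j)) = z := by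
    funext j; cases z j <;> cases c j <;> rfl
  rw [h1]
  rw [show (fun j => xor ((fun j => xor (z j) (c j)) j) (c j)) = z from h2]

end NAhelp

lemma NAncard_filter {α : Type*} [Fintype α] (p : α → Prop) [DecidablePred p] :
    {x | p x}.ncard = (univ.filter p).card := by
  classical
  rw [Set.ncard_eq_toFinset_card', Set.toFinset_setOf]

/-- (Ne\v{c}iporuk-type average-case lower bound, abstract form.)
`E : Fin n ≃ Fin (n/k) × Fin k` encodes a partition of `[n]` into `n/k` blocks of size `k`
(block `i` consists of the variables `v` with `(E v).1 = i`, enumerated by `(E v).2`).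
Given a list-decodable-style map `Enc`, a set `H` of `k`-bit functions with `|H| ≤ 2^(n/2)`,
a family `F₁` of `n`-bit functions each of which has a block all of whose restrictions lie
in `H`, and a family `F₂` of `2n`-bit functions all of whose left-restrictions lie in `F₁`,
there exists `f` on `2n` bits agreeing with every `C₀ ∈ F₂` on at most a
`1/2 + n/2^(k/4) + 2^(−n/4)` fraction of inputs. -/
theorem general_neciporuk_avg_case (n k : ℕ) (hk : 0 < k) (hkn : k ∣ n) (hk6 : 6 * k ≤ n)
    (Enc : (Fin n → Bool) → (Fin k → Bool) → Bool)
    (hEnc : ∀ g : (Fin k → Bool) → Bool,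
      ({x : Fin n → Bool |
          (1 : ℝ) / 2 + (n : ℝ) / (2 : ℝ) ^ ((k : ℝ) / 4) <
            ((Finset.univ.filter (fun z : Fin k → Bool => g z = Enc x z)).card : ℝ) /
              (2 : ℝ) ^ k}.ncard : ℝ) ≤ (2 : ℝ) ^ ((k : ℝ) / 2))
    (E : Fin n ≃ Fin (n / k) × Fin k)
    (H : Set ((Fin k → Bool) → Bool)) (hH : (H.ncard : ℝ) ≤ (2 : ℝ) ^ ((n : ℝ) / 2))
    (F₁ : Set ((Fin n → Bool) → Bool))
    (hF₁ : ∀ C ∈ F₁, ∃ i : Fin (n / k), ∀ ρ : Fin n → Bool,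
      (fun z : Fin k → Bool =>
        C (fun v => if (E v).1 = i then z (E v).2 else ρ v)) ∈ H)
    (F₂ : Set ((Fin n → Bool) → (Fin n → Bool) → Bool))
    (hF₂ : ∀ C₀ ∈ F₂, ∀ x : Fin n → Bool, (fun y => C₀ x y) ∈ F₁) :
    ∃ f : (Fin n → Bool) → (Fin n → Bool) → Bool,
      ∀ C₀ ∈ F₂,
        ((Finset.univ.filter
            (fun w : (Fin n → Bool) × (Fin n → Bool) => C₀ w.1 w.2 = f w.1 w.2)).card : ℝ) /
          (2 : ℝ) ^ (2 * n)
          ≤ 1 / 2 + (n : ℝ) / (2 : ℝ) ^ ((k : ℝ) / 4) + (2 : ℝ) ^ (-(n : ℝ) / 4) := by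
  classical
  set ε : ℝ := (n : ℝ) / (2:ℝ) ^ ((k:ℝ)/4) with hεdef
  have hε0 : 0 ≤ ε := div_nonneg (Nat.cast_nonneg n) (Real.rpow_nonneg (by norm_num) _)
  have hn0 : 0 < n := lt_of_lt_of_le (by positivity) hk6
  set f : (Fin n → Bool) → (Fin n → Bool) → Bool :=
    fun x y => Enc x (fun j => NApar E y j) with hfdef
  set B : Finset (Fin n → Bool) := univ.filter (fun x => ∃ h ∈ H, ∃ c : Fin k → Bool,
    1/2 + ε < ((univ.filter
      (fun z : Fin k → Bool => h (fun j => xor (z j) (c j)) = Enc x z)).card : ℝ) / (2:ℝ)^k)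
    with hBdef
  have hHfin : H.Finite := Set.toFinite H
  -- bound on the size of B
  have hBcard : (B.card : ℝ) ≤ (2:ℝ)^((n:ℝ)/2) * ((2:ℝ)^k * (2:ℝ)^((k:ℝ)/2)) := by
    set U := hHfin.toFinset.biUnion (fun h => (univ : Finset (Fin k → Bool)).biUnion
      (fun c => univ.filter (fun x : Fin n → Bool => 1/2 + ε < ((univ.filter
        (fun z : Fin k → Bool => h (fun j => xor (z j) (c j)) = Enc x z)).card : ℝ) / (2:ℝ)^k)))
      with hU
    have hsub : B ⊆ U := by
      intro x hx
      rw [hBdef, Finset.mem_filter] at hx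
      obtain ⟨-, h, hh, c, hc⟩ := hx
      exact Finset.mem_biUnion.mpr ⟨h, hHfin.mem_toFinset.mpr hh,
        Finset.mem_biUnion.mpr ⟨c, Finset.mem_univ c,
          Finset.mem_filter.mpr ⟨Finset.mem_univ x, hc⟩⟩⟩
    have h1 : (B.card : ℝ) ≤ ∑ h ∈ hHfin.toFinset, ∑ c : Fin k → Bool,
        ((univ.filter (fun x : Fin n → Bool => 1/2 + ε < ((univ.filter
          (fun z : Fin k → Bool => h (fun j => xor (z j) (c j)) = Enc x z)).card : ℝ)
            / (2:ℝ)^k)).card : ℝ) := by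
      have := (Finset.card_le_card hsub).trans (Finset.card_biUnion_le.trans
        (Finset.sum_le_sum (fun h _ => Finset.card_biUnion_le)))
      calc (B.card : ℝ) ≤ ((∑ h ∈ hHfin.toFinset, ∑ c : Fin k → Bool,
          (univ.filter (fun x : Fin n → Bool => 1/2 + ε < ((univ.filter
          (fun z : Fin k → Bool => h (fun j => xor (z j) (c j)) = Enc x z)).card : ℝ)
            / (2:ℝ)^k)).card : ℕ) : ℝ) := by exact_mod_cast this
        _ = _ := by push_cast; ring
    have h2 : ∀ (g : (Fin k → Bool) → Bool),
        ((univ.filter (fun x : Fin n → Bool => 1/2 + ε < ((univ.filter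
          (fun z : Fin k → Bool => g z = Enc x z)).card : ℝ) / (2:ℝ)^k)).card : ℝ)
          ≤ (2:ℝ)^((k:ℝ)/2) := by
      intro g
      have := hEnc g
      rwa [NAncard_filter] at this
    calc (B.card : ℝ) ≤ ∑ h ∈ hHfin.toFinset, ∑ c : Fin k → Bool,
        ((univ.filter (fun x : Fin n → Bool => 1/2 + ε < ((univ.filter
          (fun z : Fin k → Bool => h (fun j => xor (z j) (c j)) = Enc x z)).card : ℝ)
            / (2:ℝ)^k)).card : ℝ) := h1
      _ ≤ ∑ h ∈ hHfin.toFinset, ∑ _c : Fin k → Bool, (2:ℝ)^((k:ℝ)/2) := by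
          refine Finset.sum_le_sum fun h _ => Finset.sum_le_sum fun c _ => ?_
          exact h2 (fun z => h (fun j => xor (z j) (c j)))
      _ = (hHfin.toFinset.card : ℝ) * ((2:ℝ)^k * (2:ℝ)^((k:ℝ)/2)) := by
          simp [Finset.sum_const, Finset.card_univ]
      _ ≤ (2:ℝ)^((n:ℝ)/2) * ((2:ℝ)^k * (2:ℝ)^((k:ℝ)/2)) := by
          have : (hHfin.toFinset.card : ℝ) ≤ (2:ℝ)^((n:ℝ)/2) := by
            rw [← Set.ncard_eq_toFinset_card H hHfin]; exact hH
          have hpos : (0:ℝ) ≤ (2:ℝ)^k * (2:ℝ)^((k:ℝ)/2) := by positivity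
          exact mul_le_mul_of_nonneg_right this hpos
  refine ⟨f, ?_⟩
  intro C₀ hC₀
  -- bound for good x
  have hgood : ∀ x ∉ B,
      ((univ.filter (fun y => C₀ x y = f x y)).card : ℝ) ≤ (1/2 + ε) * (2:ℝ)^n := by
    intro x hxB
    obtain ⟨i, hi⟩ := hF₁ _ (hF₂ C₀ hC₀ x)
    have hsplit : (univ.filter (fun y => C₀ x y = f x y)).card
        = ∑ ρ : {i' : Fin (n/k) // i' ≠ i} → Fin k → Bool,
            (univ.filter (fun w : Fin k → Bool =>
              C₀ x (NAmrg E i w ρ) = f x (NAmrg E i w ρ))).card := by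
      rw [NAcard_filter_equiv (NAsplit E i) (fun y => C₀ x y = f x y)]
      exact NAcard_filter_prod
        (fun ρ (w : Fin k → Bool) => C₀ x (NAmrg E i w ρ) = f x (NAmrg E i w ρ))
    have hρbound : ∀ ρ : {i' : Fin (n/k) // i' ≠ i} → Fin k → Bool,
        ((univ.filter (fun w : Fin k → Bool =>
            C₀ x (NAmrg E i w ρ) = f x (NAmrg E i w ρ))).card : ℝ) ≤ (1/2 + ε) * (2:ℝ)^k := by
      intro ρ
      set ρ₀ : Fin n → Bool := NAmrg E i (fun _ => false) ρ with hρ₀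
      set hfun : (Fin k → Bool) → Bool :=
        fun z => C₀ x (fun v => if (E v).1 = i then z (E v).2 else ρ₀ v) with hhfun
      have hhH : hfun ∈ H := hi ρ₀
      set c : Fin k → Bool := NAcpar i ρ with hc
      have h1 : ∀ w, C₀ x (NAmrg E i w ρ) = hfun w := by
        intro w
        have harg : NAmrg E i w ρ = fun v => if (E v).1 = i then w (E v).2 else ρ₀ v := by
          funext v
          by_cases hv : (E v).1 = i
          · simp [NAmrg, hv]
          · simp [NAmrg, hv, hρ₀]
        rw [harg]
      have h2 : ∀ w, f x (NAmrg E i w ρ) = Enc x (fun j => xor (w j) (c j)) := by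
        intro w
        show Enc x (fun j => NApar E (NAmrg E i w ρ) j) = _
        congr 1
        funext j
        exact NApar_mrg E i w ρ j
      have h3 : (univ.filter (fun w : Fin k → Bool =>
            C₀ x (NAmrg E i w ρ) = f x (NAmrg E i w ρ))).card
          = (univ.filter (fun z : Fin k → Bool =>
              hfun (fun j => xor (z j) (c j)) = Enc x z)).card := by
        rw [← NAcard_shift hfun (Enc x) c]
        congr 1
        apply Finset.filter_congr
        intro w _
        rw [h1 w, h2 w]
      rw [h3]
      have hxg : ¬ (1/2 + ε < ((univ.filter (fun z : Fin k → Bool =>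
          hfun (fun j => xor (z j) (c j)) = Enc x z)).card : ℝ) / (2:ℝ)^k) := by
        intro hcon
        exact hxB (Finset.mem_filter.mpr ⟨Finset.mem_univ x, ⟨hfun, hhH, c, hcon⟩⟩)
      rw [not_lt, div_le_iff₀ (by positivity)] at hxg
      linarith
    have hm1 : 1 ≤ n / k := (Nat.one_le_div_iff hk).mpr (by omega)
    have hcards : (Fintype.card ({i' : Fin (n/k) // i' ≠ i} → Fin k → Bool)) * 2^k = 2^n := by
      have hsub : Fintype.card {i' : Fin (n/k) // i' ≠ i} = n/k - 1 := by
        have h6 : Fintype.card {i' : Fin (n/k) // ¬ (i' = i)}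
            = Fintype.card (Fin (n/k)) - Fintype.card {i' : Fin (n/k) // i' = i} :=
          Fintype.card_subtype_compl _
        rw [Fintype.card_subtype_eq, Fintype.card_fin] at h6
        exact h6
      have hck : Fintype.card ({i' : Fin (n/k) // i' ≠ i} → Fin k → Bool)
          = (2^k) ^ (n/k - 1) := by
        rw [Fintype.card_fun, hsub]
        congr 1
        simp [Fintype.card_fun]
      rw [hck, ← pow_mul, ← pow_add]
      congr 1
      have h5 : k * ((n/k - 1) + 1) = k * (n/k) := by rw [Nat.sub_add_cancel hm1]
      rw [Nat.mul_add, Nat.mul_one, Nat.mul_div_cancel' hkn] at h5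
      exact h5
    rw [hsplit]
    push_cast
    calc (∑ ρ : {i' : Fin (n/k) // i' ≠ i} → Fin k → Bool,
          ((univ.filter (fun w : Fin k → Bool =>
            C₀ x (NAmrg E i w ρ) = f x (NAmrg E i w ρ))).card : ℝ))
        ≤ ∑ _ρ : {i' : Fin (n/k) // i' ≠ i} → Fin k → Bool, (1/2 + ε) * (2:ℝ)^k :=
          Finset.sum_le_sum fun ρ _ => hρbound ρ
      _ = (Fintype.card ({i' : Fin (n/k) // i' ≠ i} → Fin k → Bool) : ℝ) * ((1/2 + ε) * (2:ℝ)^k) := by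
          simp [Finset.sum_const, Finset.card_univ, mul_assoc]
      _ = (1/2 + ε) * (2:ℝ)^n := by
          have hcR : (Fintype.card ({i' : Fin (n/k) // i' ≠ i} → Fin k → Bool) : ℝ) * (2:ℝ)^k
              = (2:ℝ)^n := by exact_mod_cast hcards
          rw [show (Fintype.card ({i' : Fin (n/k) // i' ≠ i} → Fin k → Bool) : ℝ)
              * ((1/2 + ε) * (2:ℝ)^k)
              = ((Fintype.card ({i' : Fin (n/k) // i' ≠ i} → Fin k → Bool) : ℝ) * (2:ℝ)^k)
                * (1/2 + ε) from by ring, hcR]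
          ring
  -- total count
  have hcount : ((univ.filter
        (fun w : (Fin n → Bool) × (Fin n → Bool) => C₀ w.1 w.2 = f w.1 w.2)).card : ℝ)
      ≤ B.card * 2^n + 2^n * ((1/2+ε) * 2^n) := by
    have hprod := NAcard_filter_prod (fun (x y : Fin n → Bool) => C₀ x y = f x y)
    rw [hprod]
    push_cast
    have hx : ∀ x : Fin n → Bool, ((univ.filter (fun y => C₀ x y = f x y)).card : ℝ)
        ≤ (if x ∈ B then (2:ℝ)^n else 0) + (1/2 + ε) * (2:ℝ)^n := by
      intro x
      by_cases hxB : x ∈ B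
      · rw [if_pos hxB]
        have h1 : (univ.filter (fun y => C₀ x y = f x y)).card ≤ 2^n := by
          calc (univ.filter (fun y => C₀ x y = f x y)).card
              ≤ (univ : Finset (Fin n → Bool)).card := Finset.card_filter_le _ _
            _ = 2^n := by simp [Finset.card_univ]
        have h2 : ((univ.filter (fun y => C₀ x y = f x y)).card : ℝ) ≤ (2:ℝ)^n := by
          exact_mod_cast h1
        have h3 : (0:ℝ) ≤ (1/2 + ε) * (2:ℝ)^n := by positivity
        linarith
      · rw [if_neg hxB]
        have := hgood x hxB
        linarith
    calc (∑ x : Fin n → Bool, ((univ.filter (fun y => C₀ x y = f x y)).card : ℝ))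
        ≤ ∑ x : Fin n → Bool, ((if x ∈ B then (2:ℝ)^n else 0) + (1/2 + ε) * (2:ℝ)^n) :=
          Finset.sum_le_sum fun x _ => hx x
      _ = (B.card : ℝ) * (2:ℝ)^n + (2:ℝ)^n * ((1/2 + ε) * (2:ℝ)^n) := by
          rw [Finset.sum_add_distrib, Finset.sum_ite_mem, Finset.univ_inter,
            Finset.sum_const, Finset.sum_const, Finset.card_univ]
          simp only [nsmul_eq_mul]
          have hcF : (Fintype.card (Fin n → Bool) : ℝ) = (2:ℝ)^n := by
            simp [Fintype.card_fun]
          rw [hcF]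
  -- final arithmetic
  have hBdiv : (B.card : ℝ) / (2:ℝ)^n ≤ (2:ℝ)^(-(n:ℝ)/4) := by
    have h1 : (2:ℝ)^((n:ℝ)/2) * ((2:ℝ)^k * (2:ℝ)^((k:ℝ)/2)) ≤ (2:ℝ)^(3*(n:ℝ)/4) := by
      rw [show ((2:ℝ)^k) = (2:ℝ)^((k:ℝ)) from (Real.rpow_natCast 2 k).symm,
        ← Real.rpow_add (by norm_num), ← Real.rpow_add (by norm_num)]
      apply Real.rpow_le_rpow_of_exponent_le (by norm_num)
      have h6 : (6:ℝ) * k ≤ n := by exact_mod_cast hk6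
      linarith
    have h2 : (B.card:ℝ) ≤ (2:ℝ)^(3*(n:ℝ)/4) := hBcard.trans h1
    rw [div_le_iff₀ (by positivity)]
    calc (B.card:ℝ) ≤ (2:ℝ)^(3*(n:ℝ)/4) := h2
      _ = (2:ℝ)^(-(n:ℝ)/4) * (2:ℝ)^n := by
          rw [show ((2:ℝ)^n : ℝ) = (2:ℝ)^((n:ℝ)) from (Real.rpow_natCast 2 n).symm,
            ← Real.rpow_add (by norm_num)]
          congr 1; ring
  have h2n : (2:ℝ)^(2*n) = (2:ℝ)^n * (2:ℝ)^n := by rw [two_mul, pow_add]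
  calc ((univ.filter
        (fun w : (Fin n → Bool) × (Fin n → Bool) => C₀ w.1 w.2 = f w.1 w.2)).card : ℝ) /
          (2 : ℝ) ^ (2 * n)
      ≤ (B.card * 2^n + 2^n * ((1/2+ε) * 2^n)) / (2:ℝ)^(2*n) := by gcongr
    _ = (B.card : ℝ) / (2:ℝ)^n + (1/2 + ε) := by
        rw [h2n]; field_simp
    _ ≤ (2:ℝ)^(-(n:ℝ)/4) + (1/2 + ε) := by gcongr
    _ = 1/2 + ε + (2:ℝ)^(-(n:ℝ)/4) := by ring
end

section
/- Let f : {0,1}^n → {0,1} be a Boolean function and let H ⊆ [n]. For h ∈ {0,1}^H, let ρ_h denote the restriction that sets the variables in H according to h and leaves the other variables free. Then ℓ(f) ≤ 2^{|H|} · ( max_{h ∈ {0,1}^H} ℓ(f|ρ_h) + |H| ), where ℓ(g) denotes the minimum number of wires in a comparator circuit computing g. -/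
/-- `wireComplexity f` is the minimum number of wires in a comparator circuit computing `f`. -/
noncomputable def wireComplexity {n : ℕ} (f : (Fin n → Bool) → Bool) : ℕ :=
  sInf {ℓ : ℕ | ∃ C : CompCircuit n ℓ, ∀ x, C.eval x = f x}

/-!
For each `h ∈ {0,1}^H`, take a circuit for `f|ρ_h` padded to `M = max_h ℓ(f|ρ_h)` wires, add
`|H|` wires carrying the literals that test `x_i = h_i`, and AND them into the circuit's output.
The `2^|H|` blocks of `M + |H|` wires run side by side; only the block with `h = x|_H` can output
`1`, and it outputs `f(x)`, so ORing all block outputs into one of them computes `f`.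

Minimal circuits for the restrictions must exist. For `n > 0` every function has a circuit: this
is the same construction with `H = [n]`, where the restrictions are constants. For `n = 0` no wire
can be labelled, so no circuit exists and `ℓ(f) = sInf ∅ = 0`.
-/

lemma List.and_all_congr {α : Type*} {a : Bool} {p q : α → Bool}
    (h : ∀ w, (a && p w) = (a && q w)) (l : List α) : (a && l.all p) = (a && l.all q) := by
  cases a
  · rfl
  · obtain rfl : p = q := funext (by simpa using h)
    rfl

lemma List.or_any_congr {α : Type*} {a : Bool} {p q : α → Bool}
    (h : ∀ w, (a || p w) = (a || q w)) (l : List α) : (a || l.any p) = (a || l.any q) := by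
  cases a
  · obtain rfl : p = q := funext (by simpa using h)
    rfl
  · rfl

namespace Comparator

variable {V : Type*} [DecidableEq V]

/-- `CompCircuit.applyGate` over an arbitrary wire type: circuits are assembled on structured
wire types (products, sums) and numbered by `Fin ℓ` only at the end. -/
def step (g : V × V) (v : V → Bool) : V → Bool :=
  fun w => if w = g.1 then v g.1 && v g.2 else if w = g.2 then v g.1 || v g.2 else v w

def run (gs : List (V × V)) (v : V → Bool) : V → Bool :=
  gs.foldl (fun v g => step g v) v

@[simp] lemma run_nil (v : V → Bool) : run [] v = v := rfl

@[simp] lemma run_cons (g : V × V) (gs : List (V × V)) (v : V → Bool) :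
    run (g :: gs) v = run gs (step g v) := rfl

lemma run_append (gs₁ gs₂ : List (V × V)) (v : V → Bool) :
    run (gs₁ ++ gs₂) v = run gs₂ (run gs₁ v) :=
  List.foldl_append

lemma step_of_ne {g : V × V} {w : V} (h₁ : w ≠ g.1) (h₂ : w ≠ g.2) (v : V → Bool) :
    step g v w = v w := by
  simp [step, h₁, h₂]

lemma step_diag (w : V) (v : V → Bool) : step (w, w) v = v := by
  funext u
  by_cases hu : u = w <;> simp [step, hu]

lemma run_of_forall_ne {gs : List (V × V)} {w : V} (h : ∀ g ∈ gs, w ≠ g.1 ∧ w ≠ g.2)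
    (v : V → Bool) : run gs v w = v w := by
  induction gs generalizing v with
  | nil => rfl
  | cons g gs ih =>
    obtain ⟨hg₁, hg₂⟩ := h g List.mem_cons_self
    rw [run_cons, ih (fun g' hg' => h g' (List.mem_cons_of_mem _ hg')), step_of_ne hg₁ hg₂]

lemma run_filter_ne (gs : List (V × V)) (v : V → Bool) :
    run (gs.filter fun g => g.1 ≠ g.2) v = run gs v := by
  induction gs generalizing v with
  | nil => rfl
  | cons g gs ih =>
    rw [List.filter_cons]
    split_ifs with hg
    · rw [run_cons, run_cons, ih]
    · obtain ⟨a, b⟩ := g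
      obtain rfl : a = b := by simpa using hg
      rw [run_cons, step_diag, ih]

lemma run_map {W : Type*} [DecidableEq W] {e : V → W} (he : Function.Injective e)
    (gs : List (V × V)) (v : W → Bool) (w : V) :
    run (gs.map (Prod.map e e)) v (e w) = run gs (v ∘ e) w := by
  induction gs generalizing v with
  | nil => rfl
  | cons g gs ih =>
    have : step (Prod.map e e g) v ∘ e = step g (v ∘ e) := by
      funext u
      simp [step, he.eq_iff]
    rw [List.map_cons, run_cons, run_cons, ih, this]

lemma run_map_and (out : V) (l : List V) (v : V → Bool) :
    run (l.map fun c => (out, c)) v out = (v out && l.all v) := by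
  induction l generalizing v with
  | nil => simp
  | cons c l ih =>
    have hout : step (out, c) v out = (v out && v c) := by simp [step]
    -- once `out` holds `v out && v c`, the gate's effect on every other wire is masked
    have hmask : ∀ w, (v out && v c && step (out, c) v w) = (v out && v c && v w) := fun w => by
      unfold step
      split_ifs <;> subst_vars <;> cases v c <;> cases v out <;> simp
    rw [List.map_cons, run_cons, ih, hout, List.and_all_congr hmask, List.all_cons, Bool.and_assoc]

lemma run_map_or (out : V) (l : List V) (v : V → Bool) :
    run (l.map fun c => (c, out)) v out = (v out || l.any v) := by
  induction l generalizing v with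
  | nil => simp
  | cons c l ih =>
    have hout : step (c, out) v out = (v c || v out) := by
      by_cases h : out = c <;> simp [step, h]
    have hmask : ∀ w, (v c || v out || step (c, out) v w) = (v c || v out || v w) := fun w => by
      unfold step
      split_ifs <;> subst_vars <;> cases v c <;> cases v out <;> simp
    rw [List.map_cons, run_cons, ih, hout, List.or_any_congr hmask, List.any_cons,
      Bool.or_comm (v c), Bool.or_assoc]

section Parallel

variable {I U : Type*} [DecidableEq I] [DecidableEq U]

lemma run_flatMap_prodMk_of_notMem (G : I → List (U × U)) {l : List I} {i : I} (hi : i ∉ l)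
    (v : I × U → Bool) (u : U) :
    run (l.flatMap fun j => (G j).map (Prod.map (Prod.mk j) (Prod.mk j))) v (i, u) = v (i, u) := by
  refine run_of_forall_ne (fun g hg => ?_) v
  obtain ⟨j, hj, g, -, rfl⟩ :
      ∃ j ∈ l, ∃ g' ∈ G j, Prod.map (Prod.mk j) (Prod.mk j) g' = g := by
    simpa using hg
  have hij : i ≠ j := fun h => hi (h ▸ hj)
  simp [hij]

lemma run_flatMap_prodMk (G : I → List (U × U)) {l : List I} (hl : l.Nodup) {i : I}
    (hi : i ∈ l) (v : I × U → Bool) (u : U) :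
    run (l.flatMap fun j => (G j).map (Prod.map (Prod.mk j) (Prod.mk j))) v (i, u) =
      run (G i) (fun u => v (i, u)) u := by
  induction l generalizing v with
  | nil => cases hi
  | cons a t ih =>
    obtain ⟨hat, ht⟩ := List.nodup_cons.1 hl
    rw [List.flatMap_cons, run_append]
    by_cases hia : i = a
    · subst hia
      rw [run_flatMap_prodMk_of_notMem G hat, run_map (Prod.mk_right_injective i)]
      rfl
    · rw [ih ht ((List.mem_cons.1 hi).resolve_left hia)]
      congr 1
      funext u'
      simpa using run_flatMap_prodMk_of_notMem G (l := [a]) (by simpa using hia) v u'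

end Parallel

end Comparator

def fixOn {n : ℕ} (H : Finset (Fin n)) (h : {i // i ∈ H} → Bool) (x : Fin n → Bool) :
    Fin n → Bool :=
  fun i => if hi : i ∈ H then h ⟨i, hi⟩ else x i

lemma fixOn_self {n : ℕ} (H : Finset (Fin n)) (x : Fin n → Bool) :
    fixOn H (fun i => x i) x = x := by
  funext i
  by_cases hi : i ∈ H <;> simp [fixOn, hi]

lemma fixOn_univ {n : ℕ} (h : {i // i ∈ (Finset.univ : Finset (Fin n))} → Bool)
    (x : Fin n → Bool) :
    fixOn Finset.univ h x = fun i => h ⟨i, Finset.mem_univ i⟩ := by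
  funext i
  simp [fixOn]

namespace CompCircuit

variable {n : ℕ}

lemma eval_eq_run {ℓ : ℕ} (C : CompCircuit n ℓ) (x : Fin n → Bool) :
    C.eval x = Comparator.run C.gates (C.init x) C.out := rfl

lemma litVal_neg (x : Fin n → Bool) (i : Fin n) (b : Bool) : litVal x (i, !b) = (b == x i) := by
  cases b <;> simp [litVal]

lemma exists_eval_eq_run {W : Type*} [Fintype W] [DecidableEq W] {k : ℕ} (hk : Fintype.card W = k)
    (label : W → Fin n × Bool) (gates : List (W × W)) (out : W) :
    ∃ C : CompCircuit n k,
      ∀ x, C.eval x = Comparator.run gates (fun w => litVal x (label w)) out := by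
  let e := Fintype.equivFinOfCardEq hk
  -- diagonal gates act trivially (`step_diag`), so dropping them provides `distinct`
  have distinct :
      ∀ g ∈ (gates.filter fun g => g.1 ≠ g.2).map (Prod.map e e), g.1 ≠ g.2 := by
    simp only [List.mem_map, List.mem_filter, decide_eq_true_eq]
    rintro _ ⟨g, ⟨-, hg⟩, rfl⟩
    exact e.injective.ne hg
  refine ⟨⟨label ∘ e.symm, _, distinct, e out⟩, fun x => ?_⟩
  rw [eval_eq_run, Comparator.run_map e.injective, Comparator.run_filter_ne]
  congr 1
  funext w
  simp [init]

/-- Wire `b` carries `x₀` negated iff `b`; one comparator leaves `x₀ ∧ ¬x₀` on wire `false`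
and `x₀ ∨ ¬x₀` on wire `true`. -/
lemma exists_eval_eq_const (hn : 0 < n) (b : Bool) :
    ∃ C : CompCircuit n 2, ∀ x, C.eval x = b := by
  obtain ⟨C, hC⟩ :=
    exists_eval_eq_run Fintype.card_bool (fun w => (⟨0, hn⟩, w)) [(false, true)] b
  refine ⟨C, fun x => ?_⟩
  rw [hC]
  cases b <;> simp [Comparator.step, litVal]

lemma exists_eval_eq_of_le (hn : 0 < n) {ℓ M : ℕ} (hℓM : ℓ ≤ M) (C : CompCircuit n ℓ) :
    ∃ C' : CompCircuit n M, ∀ x, C'.eval x = C.eval x := by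
  obtain ⟨C', hC'⟩ := exists_eval_eq_run (Fintype.card_fin M)
    (fun j => if hj : (j : ℕ) < ℓ then C.label ⟨j, hj⟩ else (⟨0, hn⟩, false))
    (C.gates.map (Prod.map (Fin.castLE hℓM) (Fin.castLE hℓM))) (Fin.castLE hℓM C.out)
  refine ⟨C', fun x => ?_⟩
  rw [hC', Comparator.run_map (Fin.castLE_injective hℓM), eval_eq_run]
  congr 1
  funext w
  simp [init]

section Guard

variable {M : ℕ} {H : Finset (Fin n)}

def guardLabel (D : CompCircuit n M) (h : {i // i ∈ H} → Bool) :
    Fin M ⊕ {i // i ∈ H} → Fin n × Bool :=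
  Sum.elim D.label fun i => (i.1, !h i)

noncomputable def guardGates (D : CompCircuit n M) (H : Finset (Fin n)) :
    List ((Fin M ⊕ {i // i ∈ H}) × (Fin M ⊕ {i // i ∈ H})) :=
  D.gates.map (Prod.map Sum.inl Sum.inl) ++
    (Finset.univ.toList.map Sum.inr).map fun c => (Sum.inl D.out, c)

lemma run_guardGates (D : CompCircuit n M) (h : {i // i ∈ H} → Bool) (x : Fin n → Bool) :
    Comparator.run (guardGates D H) (fun u => litVal x (guardLabel D h u)) (Sum.inl D.out) =
      (D.eval x && decide (h = fun i : {i // i ∈ H} => x i)) := by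
  rw [guardGates, Comparator.run_append, Comparator.run_map_and,
    Comparator.run_map Sum.inl_injective]
  have hinr : ∀ i, Comparator.run (D.gates.map (Prod.map Sum.inl Sum.inl))
      (fun u => litVal x (guardLabel D h u)) (Sum.inr i) = (h i == x i) := fun i => by
    rw [Comparator.run_of_forall_ne (by simp), guardLabel, Sum.elim_inr, litVal_neg]
  congr 1
  rw [List.all_map, Bool.eq_iff_iff, List.all_eq_true, decide_eq_true_iff, funext_iff]
  simp only [Function.comp_apply, hinr, beq_iff_eq, Finset.mem_toList, Finset.mem_univ,
    forall_const]

end Guard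

theorem exists_eval_eq_of_restrictions (f : (Fin n → Bool) → Bool) (H : Finset (Fin n))
    {M : ℕ} (hres : ∀ h : {i // i ∈ H} → Bool,
      ∃ D : CompCircuit n M, ∀ x, D.eval x = f (fixOn H h x)) :
    ∃ C : CompCircuit n (2 ^ H.card * (M + H.card)), ∀ x, C.eval x = f x := by
  choose D hD using hres
  let out (h : {i // i ∈ H} → Bool) : ({i // i ∈ H} → Bool) × (Fin M ⊕ {i // i ∈ H}) :=
    (h, Sum.inl (D h).out)
  let h₀ : {i // i ∈ H} → Bool := fun _ => false
  let blocks := Finset.univ.toList.flatMap fun h =>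
    (guardGates (D h) H).map (Prod.map (Prod.mk h) (Prod.mk h))
  let outs := Finset.univ.toList.map out
  obtain ⟨C, hC⟩ := exists_eval_eq_run (k := 2 ^ H.card * (M + H.card)) (by simp)
    (fun w => guardLabel (D w.1) w.1 w.2) (blocks ++ outs.map fun c => (c, out h₀)) (out h₀)
  refine ⟨C, fun x => ?_⟩
  set v := Comparator.run blocks fun w => litVal x (guardLabel (D w.1) w.1 w.2)
  have hv : ∀ h, v (out h) = ((D h).eval x && decide (h = fun i : {i // i ∈ H} => x i)) :=
    fun h => (Comparator.run_flatMap_prodMk (fun h => guardGates (D h) H) (Finset.nodup_toList _)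
      (Finset.mem_toList.2 (Finset.mem_univ h)) _ _).trans (run_guardGates (D h) h x)
  have hh₀ : v (out h₀) = true → outs.any v = true := fun h =>
    List.any_eq_true.2
      ⟨out h₀, List.mem_map_of_mem (Finset.mem_toList.2 (Finset.mem_univ _)), h⟩
  rw [hC, Comparator.run_append, Comparator.run_map_or, Bool.or_eq_right_iff_imp.2 hh₀,
    List.any_map, Bool.eq_iff_iff, List.any_eq_true]
  simp [hv, hD, fixOn_self]

lemma exists_eval_eq (hn : 0 < n) (f : (Fin n → Bool) → Bool) :
    ∃ ℓ, ∃ C : CompCircuit n ℓ, ∀ x, C.eval x = f x := by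
  refine ⟨_, exists_eval_eq_of_restrictions (M := 2) f Finset.univ fun h => ?_⟩
  obtain ⟨C, hC⟩ := exists_eval_eq_const hn (f fun i => h ⟨i, Finset.mem_univ i⟩)
  exact ⟨C, fun x => by rw [hC, fixOn_univ]⟩

end CompCircuit

lemma wireComplexity_le_of_exists {n ℓ : ℕ} {f : (Fin n → Bool) → Bool}
    (hf : ∃ C : CompCircuit n ℓ, ∀ x, C.eval x = f x) : wireComplexity f ≤ ℓ :=
  Nat.sInf_le hf

lemma exists_compCircuit_wireComplexity {n : ℕ} (hn : 0 < n) (f : (Fin n → Bool) → Bool) :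
    ∃ C : CompCircuit n (wireComplexity f), ∀ x, C.eval x = f x :=
  Nat.sInf_mem (CompCircuit.exists_eval_eq hn f)

lemma wireComplexity_fin_zero (f : (Fin 0 → Bool) → Bool) : wireComplexity f = 0 :=
  Nat.sInf_eq_zero.2 <| .inr <| Set.eq_empty_of_forall_notMem fun _ ⟨C, _⟩ =>
    (C.label C.out).1.elim0

/-- For `f : {0,1}^n → {0,1}` and `H ⊆ [n]`, letting `ρ_h` (for
`h ∈ {0,1}^H`) be the restriction fixing the variables of `H` according to `h`,
`ℓ(f) ≤ 2^|H| · (max_h ℓ(f|ρ_h) + |H|)`. -/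
theorem wireComplexity_restriction_recursion {n : ℕ} (f : (Fin n → Bool) → Bool)
    (H : Finset (Fin n)) :
    wireComplexity f ≤ 2 ^ H.card *
      (Finset.univ.sup (fun h : {i // i ∈ H} → Bool =>
        wireComplexity (fun x : Fin n → Bool =>
          f (fun i => if hi : i ∈ H then h ⟨i, hi⟩ else x i))) + H.card) := by
  rcases Nat.eq_zero_or_pos n with rfl | hn
  · simp [wireComplexity_fin_zero]
  refine wireComplexity_le_of_exists (CompCircuit.exists_eval_eq_of_restrictions f H fun h => ?_)
  obtain ⟨D, hD⟩ := exists_compCircuit_wireComplexity hn fun x => f (fixOn H h x)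
  obtain ⟨D', hD'⟩ := CompCircuit.exists_eval_eq_of_le hn
    (Finset.le_sup (f := fun h => wireComplexity fun x => f (fixOn H h x)) (Finset.mem_univ h)) D
  exact ⟨D', fun x => (hD' x).trans (hD x)⟩
end

section
/- Let X_1, ..., X_n be {0,1}-valued k-wise independent random variables with Pr[X_i = 1] = p for every i. Let X = Σ_{i=1}^n X_i and μ = E[X] = np. Then Pr[X ≥ k] ≤ μ^k / k!. -/
/-!
If at least `k` of the `X_i` equal `1`, then some `k`-set of them is all `1`. By the union bound
and `k`-wise independence, `Pr[X ≥ k] ≤ C(n, k) p^k ≤ (n^k / k!) p^k = μ^k / k!`.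
-/

open MeasureTheory ProbabilityTheory Finset

/-- A family of Boolean random variables is `k`-wise independent if any at most `k` of them
are mutually independent. -/
def KWiseIndep {Ω : Type*} [MeasurableSpace Ω] (P : Measure Ω) {n : ℕ} (k : ℕ)
    (X : Fin n → Ω → Bool) : Prop :=
  ∀ A : Finset (Fin n), A.card ≤ k →
    iIndepFun (m := fun _ : A => (inferInstance : MeasurableSpace Bool)) (fun i : A => X i) P

section UnionBound

variable {Ω ι : Type*} [Fintype ι]

lemma setOf_le_card_filter_subset_biUnion_powersetCard (X : ι → Ω → Bool) (k : ℕ) :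
    {ω | k ≤ #{i | X i ω}} ⊆ ⋃ A ∈ (univ : Finset ι).powersetCard k, ⋂ i ∈ A, {ω | X i ω} := by
  intro ω hω
  obtain ⟨A, hA, rfl⟩ := exists_subset_card_eq hω
  simp only [Set.mem_iUnion, Set.mem_iInter, mem_powersetCard]
  exact ⟨A, ⟨subset_univ A, rfl⟩, fun i hi => (mem_filter.mp (hA hi)).2⟩

lemma measure_le_card_filter_le_sum_powersetCard [MeasurableSpace Ω] (μ : Measure Ω)
    (X : ι → Ω → Bool) (k : ℕ) :
    μ {ω | k ≤ #{i | X i ω}} ≤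
      ∑ A ∈ (univ : Finset ι).powersetCard k, μ (⋂ i ∈ A, {ω | X i ω}) :=
  (measure_mono (setOf_le_card_filter_subset_biUnion_powersetCard X k)).trans
    (measure_biUnion_finset_le _ _)

end UnionBound

lemma KWiseIndep.measure_biInter_eq_prod {Ω : Type*} [MeasurableSpace Ω] {P : Measure Ω}
    {n k : ℕ} {X : Fin n → Ω → Bool} (h : KWiseIndep P k X) {A : Finset (Fin n)}
    (hA : #A ≤ k) :
    P (⋂ i ∈ A, {ω | X i ω}) = ∏ i ∈ A, P {ω | X i ω} := by
  have hinter : (⋂ i ∈ A, {ω | X i ω}) = ⋂ i : A, X i ⁻¹' {true} := by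
    ext ω; simp
  rw [hinter, (h A hA).meas_iInter fun i => ⟨{true}, measurableSet_singleton true, rfl⟩,
    ← prod_coe_sort A]
  rfl

lemma choose_mul_ofReal_pow_le (n k : ℕ) (p : ℝ) :
    (n.choose k : ENNReal) * ENNReal.ofReal p ^ k ≤
      ENNReal.ofReal (((n : ℝ) * p) ^ k / k.factorial) := by
  rcases le_or_gt 0 p with hp | hp
  · rw [← ENNReal.ofReal_pow hp, ← ENNReal.ofReal_natCast, ← ENNReal.ofReal_mul (by positivity)]
    refine ENNReal.ofReal_le_ofReal ?_
    calc (n.choose k : ℝ) * p ^ k ≤ (n : ℝ) ^ k / k.factorial * p ^ k := by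
          gcongr; exact Nat.choose_le_pow_div k n
      _ = ((n : ℝ) * p) ^ k / k.factorial := by ring
  · rcases Nat.eq_zero_or_pos k with rfl | hk
    · simp
    · simp [ENNReal.ofReal_eq_zero.mpr hp.le, zero_pow hk.ne']

theorem kwise_upper_tail_general {Ω : Type*} [MeasurableSpace Ω] (P : Measure Ω)
    {n : ℕ} (k : ℕ)
    (X : Fin n → Ω → Bool) (p : ℝ)
    (hindep : KWiseIndep P k X)
    (hp : ∀ i, P {ω | X i ω = true} = ENNReal.ofReal p) :
    P {ω | (k : ℝ) ≤ ∑ i, (if X i ω then (1 : ℝ) else 0)}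
      ≤ ENNReal.ofReal (((n : ℝ) * p) ^ k / (Nat.factorial k)) := by
  have hevent : {ω | (k : ℝ) ≤ ∑ i, (if X i ω then (1 : ℝ) else 0)} =
      {ω | k ≤ #{i | X i ω}} := by
    ext ω; simp
  calc P {ω | (k : ℝ) ≤ ∑ i, (if X i ω then (1 : ℝ) else 0)}
      ≤ ∑ A ∈ (univ : Finset (Fin n)).powersetCard k, P (⋂ i ∈ A, {ω | X i ω}) :=
        hevent ▸ measure_le_card_filter_le_sum_powersetCard P X k
    _ = ∑ _A ∈ (univ : Finset (Fin n)).powersetCard k, ENNReal.ofReal p ^ k := by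
        refine sum_congr rfl fun A hA => ?_
        have hcard := (mem_powersetCard.mp hA).2
        rw [hindep.measure_biInter_eq_prod hcard.le, prod_congr rfl fun i _ => hp i,
          prod_const, hcard]
    _ = (n.choose k : ENNReal) * ENNReal.ofReal p ^ k := by
        rw [sum_const, card_powersetCard, card_univ, Fintype.card_fin, nsmul_eq_mul]
    _ ≤ _ := choose_mul_ofReal_pow_le n k p

/-- Let `X_1, …, X_n` be `{0,1}`-valued `k`-wise independent random
variables with `Pr[X_i = 1] = p`.  With `X = Σ X_i` and `μ = E[X] = np`, we have
`Pr[X ≥ k] ≤ μ^k / k!`. -/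
theorem kwise_upper_tail {Ω : Type*} [MeasurableSpace Ω] (P : Measure Ω)
    [IsProbabilityMeasure P] {n : ℕ} (k : ℕ)
    (X : Fin n → Ω → Bool) (hX : ∀ i, Measurable (X i)) (p : ℝ)
    (hindep : KWiseIndep P k X)
    (hp : ∀ i, P {ω | X i ω = true} = ENNReal.ofReal p) :
    P {ω | (k : ℝ) ≤ ∑ i, (if X i ω then (1 : ℝ) else 0)}
      ≤ ENNReal.ofReal (((n : ℝ) * p) ^ k / (Nat.factorial k)) :=
  kwise_upper_tail_general P k X p hindep hp
end

section
/- For every ε ∈ (0,1) there exists N = N(ε) such that for all n ≥ N the following holds. Let δ = ε/3, and let S_1, S_2, ..., S_m be any partition of [n] into m = ⌈n^{1−δ}⌉ blocks, each of size at most ⌈n^{δ}⌉. Then for every comparator circuit C on n variables with at most n^{1.5−ε} wires, there exists a block S_i such that the number of distinct functions in {C|ρ : ρ ∈ {0,1}^{[n]∖S_i}} is at most 2^{n^{1−ε/2}}. -/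
open Finset

/-!
Fix a block `B` and let `k` be the number of wires whose literal lies in `B`. Run the circuit
restricted by `ρ` over the lattice of Boolean functions of the input: each of the `k` wires
labelled inside `B` carries a token, a literal function that does not depend on `ρ`, and every
other wire carries a constant `⊥` or `⊤`. A comparator acting on a constant and a token, or on two
comparable tokens, only moves values between wires; on two incomparable tokens it replaces them by
their meet and join, which strictly increases the number of comparable ordered pairs of tokens.
So at most `k²` merges occur, and the output is a constant or one of at most `(k²)^(k²)·k`
functions that do not depend on `ρ`. The block with fewest wires has `k² ≤ n^(1-4ε/3)`, and
`(k²+2)^(k²+1) ≤ 2^(n^(1-ε/2))` for large `n`.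
-/

section Comparator

variable {ι α β : Type*} [DecidableEq ι] [Lattice α] [Lattice β]

def comparator (a b : ι) (v : ι → α) : ι → α :=
  fun w => if w = a then v a ⊓ v b else if w = b then v a ⊔ v b else v w

def runComparators (G : List (ι × ι)) (v : ι → α) : ι → α :=
  G.foldl (fun v g => comparator g.1 g.2 v) v

@[simp]
lemma runComparators_nil (v : ι → α) : runComparators [] v = v := rfl

@[simp]
lemma runComparators_cons (g : ι × ι) (G : List (ι × ι)) (v : ι → α) :
    runComparators (g :: G) v = runComparators G (comparator g.1 g.2 v) := rfl

lemma runComparators_append (G H : List (ι × ι)) (v : ι → α) :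
    runComparators (G ++ H) v = runComparators H (runComparators G v) :=
  List.foldl_append

lemma comparator_of_le {a b : ι} {v : ι → α} (h : v a ≤ v b) : comparator a b v = v := by
  funext w
  unfold comparator
  split_ifs with ha hb
  · subst ha; exact inf_eq_left.2 h
  · subst hb; exact sup_eq_right.2 h
  · rfl

lemma comparator_of_ge {a b : ι} {v : ι → α} (h : v b ≤ v a) :
    comparator a b v = v ∘ Equiv.swap a b := by
  funext w
  unfold comparator
  split_ifs with ha hb
  · subst ha; simpa using inf_eq_right.2 h
  · subst hb; simpa using sup_eq_left.2 h
  · simp [Equiv.swap_apply_of_ne_of_ne, *]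

lemma runComparators_replicate_self (t : ι) (r : ℕ) (v : ι → α) :
    runComparators (List.replicate r (t, t)) v = v := by
  induction r with
  | zero => rfl
  | succ r ih => rw [List.replicate_succ, runComparators_cons, comparator_of_le le_rfl, ih]

lemma map_comparator (f : LatticeHom α β) (a b : ι) (v : ι → α) :
    f ∘ comparator a b v = comparator a b (f ∘ v) := by
  funext w
  simp only [comparator, Function.comp_apply, apply_ite f, map_inf, map_sup]

lemma map_runComparators (f : LatticeHom α β) (G : List (ι × ι)) (v : ι → α) :
    f ∘ runComparators G v = runComparators G (f ∘ v) := by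
  induction G generalizing v with
  | nil => rfl
  | cons g G ih => rw [runComparators_cons, ih, map_comparator]; rfl

end Comparator

section ComparablePairs

variable {ι α : Type*} [Fintype ι] [Lattice α] [DecidableLE α]

def comparablePairs (v : ι → α) : ℕ := #{p : ι × ι | v p.1 ≤ v p.2}

lemma comparablePairs_le_card_sq (v : ι → α) : comparablePairs v ≤ Fintype.card ι ^ 2 := by
  rw [sq, ← Fintype.card_prod]
  exact card_le_univ _

lemma ite_add_ite_le_ite_inf_add_ite_sup (u w f : α) :
    (if u ≤ f then 1 else 0) + (if w ≤ f then 1 else 0) ≤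
      (if u ⊓ w ≤ f then 1 else 0) + (if u ⊔ w ≤ f then 1 else 0 : ℕ) := by
  have hu : u ≤ f → u ⊓ w ≤ f := inf_le_of_left_le
  have hw : w ≤ f → u ⊓ w ≤ f := inf_le_of_right_le
  simp only [sup_le_iff]
  split_ifs <;> first | omega | tauto

lemma ite_add_ite_le_ite_le_inf_add_ite_le_sup (u w f : α) :
    (if f ≤ u then 1 else 0) + (if f ≤ w then 1 else 0) ≤
      (if f ≤ u ⊓ w then 1 else 0) + (if f ≤ u ⊔ w then 1 else 0 : ℕ) := by
  have hu : f ≤ u → f ≤ u ⊔ w := le_sup_of_le_left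
  have hw : f ≤ w → f ≤ u ⊔ w := le_sup_of_le_right
  simp only [le_inf_iff]
  split_ifs <;> first | omega | tauto

variable [DecidableEq ι]

lemma sum_sum_eq_add_compl {M : Type*} [AddCommMonoid M] (P : Finset ι) (g : ι → ι → M) :
    ∑ x, ∑ y, g x y = ∑ x ∈ P, ∑ y ∈ P, g x y + ∑ y ∈ Pᶜ, ∑ x ∈ P, g x y +
      ∑ x ∈ Pᶜ, ∑ y ∈ P, g x y + ∑ x ∈ Pᶜ, ∑ y ∈ Pᶜ, g x y := by
  simp only [← Finset.sum_add_sum_compl P, Finset.sum_add_distrib]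
  rw [Finset.sum_comm (s := P) (t := Pᶜ)]
  abel

lemma comparablePairs_lt_comparator {a b : ι} {v : ι → α} (hab : a ≠ b)
    (h₁ : ¬ v a ≤ v b) (h₂ : ¬ v b ≤ v a) :
    comparablePairs v < comparablePairs (comparator a b v) := by
  set v' := comparator a b v
  have hva : v' a = v a ⊓ v b := by simp [v', comparator]
  have hvb : v' b = v a ⊔ v b := by simp [v', comparator, hab.symm]
  have hvw : ∀ w ∈ ({a, b} : Finset ι)ᶜ, v' w = v w := by
    intro w hw
    simp only [Finset.mem_compl, Finset.mem_insert, Finset.mem_singleton, not_or] at hw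
    simp [v', comparator, hw.1, hw.2]
  simp only [comparablePairs, Finset.card_filter, Fintype.sum_prod_type]
  rw [sum_sum_eq_add_compl {a, b}, sum_sum_eq_add_compl {a, b}]
  simp only [Finset.sum_pair hab, hva, hvb]
  refine add_lt_add_of_lt_of_le (add_lt_add_of_lt_of_le (add_lt_add_of_lt_of_le ?_ ?_) ?_)
    (Finset.sum_le_sum fun x hx => Finset.sum_le_sum fun y hy => by rw [hvw x hx, hvw y hy])
  · simp only [h₁, h₂, le_refl, inf_le_sup, if_true, if_false]
    omega
  · exact Finset.sum_le_sum fun x hx => by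
      rw [hvw x hx]; exact ite_add_ite_le_ite_inf_add_ite_sup _ _ _
  · exact Finset.sum_le_sum fun x hx => by
      rw [hvw x hx]; exact ite_add_ite_le_ite_le_inf_add_ite_le_sup _ _ _

end ComparablePairs

section TokenState

variable {ι κ α : Type*} [DecidableEq ι] [Lattice α] [BoundedOrder α]

def IsTokenState (T : κ → α) (s : ι → α) : Prop :=
  ∃ pos : κ ↪ ι, (∀ t, s (pos t) = T t) ∧ ∀ w ∉ Set.range pos, s w = ⊥ ∨ s w = ⊤

lemma IsTokenState.comparator_cases [DecidableEq κ] {T : κ → α} {s : ι → α}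
    (hs : IsTokenState T s) (a b : ι) :
    IsTokenState T (comparator a b s) ∨ ∃ i j, i ≠ j ∧ ¬ T i ≤ T j ∧ ¬ T j ≤ T i ∧
      IsTokenState (comparator i j T) (comparator a b s) := by
  obtain ⟨pos, hpos, hconst⟩ := hs
  by_cases hab : s a ≤ s b
  · rw [comparator_of_le hab]
    exact Or.inl ⟨pos, hpos, hconst⟩
  by_cases hba : s b ≤ s a
  · refine Or.inl ⟨pos.trans (Equiv.swap a b).toEmbedding, fun t => ?_, fun w hw => ?_⟩
    · simp [comparator_of_ge hba, hpos]
    · rw [comparator_of_ge hba]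
      refine hconst _ fun ⟨t, ht⟩ => hw ⟨t, ?_⟩
      simp [ht]
  -- `⊥` and `⊤` are comparable to everything, so both wires carry tokens.
  have mem_range : ∀ w, ¬ (s w = ⊥ ∨ s w = ⊤) → w ∈ Set.range pos :=
    fun w hw => by_contra fun h => hw (hconst w h)
  obtain ⟨i, rfl⟩ := mem_range a (by rintro (h | h) <;> simp_all)
  obtain ⟨j, rfl⟩ := mem_range b (by rintro (h | h) <;> simp_all)
  have hij : i ≠ j := by rintro rfl; exact hab le_rfl
  rw [hpos, hpos] at hab hba
  refine Or.inr ⟨i, j, hij, hab, hba, pos, fun t => ?_, fun w hw => ?_⟩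
  · simp [comparator, pos.injective.eq_iff, hpos]
  · have hwi : w ≠ pos i := fun h => hw ⟨i, h.symm⟩
    have hwj : w ≠ pos j := fun h => hw ⟨j, h.symm⟩
    simp [comparator, hwi, hwj, hconst w hw]

end TokenState

section Merges

variable {ι κ α : Type*} [DecidableEq ι] [DecidableEq κ] [Fintype κ] [Lattice α] [BoundedOrder α]

def IsReachableTokenState [DecidableLE α] (T₀ : κ → α) (s : ι → α) : Prop :=
  ∃ L : List (κ × κ), comparablePairs T₀ + L.length ≤ comparablePairs (runComparators L T₀) ∧
    IsTokenState (runComparators L T₀) s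

def tokenValues (T₀ : κ → α) : Set α :=
  {⊥, ⊤} ∪ Set.range fun p : List.Vector (κ × κ) (Fintype.card κ ^ 2) × κ =>
    runComparators p.1.toList T₀ p.2

lemma ncard_tokenValues_le (T₀ : κ → α) :
    (tokenValues T₀).ncard ≤ 2 + (Fintype.card κ ^ 2) ^ (Fintype.card κ ^ 2) * Fintype.card κ := by
  refine (Set.ncard_union_le _ _).trans (add_le_add ?_ ?_)
  · exact (Set.ncard_insert_le _ _).trans (by simp)
  · rw [← Set.image_univ]
    refine (Set.ncard_image_le Set.finite_univ).trans ?_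
    simp [Set.ncard_univ, sq]

variable [DecidableLE α] {T₀ : κ → α}

lemma IsReachableTokenState.comparator {s : ι → α} (hs : IsReachableTokenState T₀ s) (a b : ι) :
    IsReachableTokenState T₀ (comparator a b s) := by
  obtain ⟨L, hL, hs⟩ := hs
  rcases hs.comparator_cases a b with hs' | ⟨i, j, hij, hi, hj, hs'⟩
  · exact ⟨L, hL, hs'⟩
  · refine ⟨L ++ [(i, j)], ?_, by rwa [runComparators_append]⟩
    have := comparablePairs_lt_comparator hij hi hj
    rw [runComparators_append, List.length_append]
    simp only [runComparators_cons, runComparators_nil, List.length_singleton]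
    omega

lemma IsReachableTokenState.runComparators {s : ι → α} (hs : IsReachableTokenState T₀ s)
    (G : List (ι × ι)) : IsReachableTokenState T₀ (runComparators G s) := by
  induction G generalizing s with
  | nil => exact hs
  | cons g G ih => exact ih (hs.comparator g.1 g.2)

lemma IsReachableTokenState.mem_tokenValues {s : ι → α} (hs : IsReachableTokenState T₀ s)
    (w : ι) : s w ∈ tokenValues T₀ := by
  obtain ⟨L, hL, pos, hpos, hconst⟩ := hs
  by_cases hw : w ∈ Set.range pos
  · obtain ⟨t, rfl⟩ := hw
    have hlen : L.length ≤ Fintype.card κ ^ 2 := by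
      have := hL.trans (comparablePairs_le_card_sq _); omega
    -- pad with trivial comparators to reach the length `card κ ^ 2` exactly
    refine Or.inr ⟨(⟨L ++ List.replicate (Fintype.card κ ^ 2 - L.length) (t, t), ?_⟩, t), ?_⟩
    · simp only [List.length_append, List.length_replicate]; omega
    · simp [runComparators_append, runComparators_replicate_self, hpos]
  · rcases hconst w hw with h | h <;> simp [tokenValues, h]

end Merges

namespace CompCircuit

variable {n ℓ : ℕ}

def blockLiterals (C : CompCircuit n ℓ) (B : Finset (Fin n)) :
    {w // (C.label w).1 ∈ B} → (Fin n → Bool) → Bool :=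
  fun w x => litVal x (C.label w)

lemma restrict_mem_tokenValues (C : CompCircuit n ℓ) (B : Finset (Fin n)) (ρ : Fin n → Bool) :
    (fun x => C.eval fun j => if j ∈ B then x j else ρ j) ∈ tokenValues (C.blockLiterals B) := by
  classical
  set S₀ : Fin ℓ → (Fin n → Bool) → Bool :=
    fun w x => C.init (fun j => if j ∈ B then x j else ρ j) w
  -- `applyGate` is definitionally `comparator` over `Bool`, whose `⊓` and `⊔` are `&&` and `||`.
  have heval : (fun x => C.eval fun j => if j ∈ B then x j else ρ j) =
      runComparators C.gates S₀ C.out :=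
    funext fun x => congrFun (map_runComparators (Pi.evalLatticeHom x) C.gates S₀).symm C.out
  have hS₀ : IsReachableTokenState (C.blockLiterals B) S₀ := by
    refine ⟨[], le_rfl, Function.Embedding.subtype _, fun w => ?_, fun w hw => ?_⟩
    · funext x
      simp [S₀, blockLiterals, init, litVal, w.2]
    · have hwB : (C.label w).1 ∉ B := fun h => hw ⟨⟨w, h⟩, rfl⟩
      cases h : litVal ρ (C.label w)
      · left; funext x; simpa [S₀, init, litVal, hwB] using h
      · right; funext x; simpa [S₀, init, litVal, hwB] using h
  rw [heval]
  exact (hS₀.runComparators C.gates).mem_tokenValues C.out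

lemma ncard_restrictions_le (C : CompCircuit n ℓ) (B : Finset (Fin n)) :
    {g : (Fin n → Bool) → Bool | ∃ ρ : Fin n → Bool,
        g = fun x => C.eval fun j => if j ∈ B then x j else ρ j}.ncard ≤
      2 + (#{w | (C.label w).1 ∈ B} ^ 2) ^ (#{w | (C.label w).1 ∈ B} ^ 2) *
        #{w | (C.label w).1 ∈ B} := by
  have hcard := ncard_tokenValues_le (C.blockLiterals B)
  rw [Fintype.card_subtype] at hcard
  refine (Set.ncard_le_ncard ?_ (Set.toFinite _)).trans hcard
  rintro g ⟨ρ, rfl⟩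
  exact C.restrict_mem_tokenValues B ρ

end CompCircuit

lemma exists_card_mul_card_filter_le {ι β γ : Type*} [Fintype ι] [Nonempty ι] [Fintype β]
    [DecidableEq β] [DecidableEq γ] (S : ι → Finset γ)
    (hS : Pairwise fun i j => Disjoint (S i) (S j)) (f : β → γ) :
    ∃ i, Fintype.card ι * #{b | f b ∈ S i} ≤ Fintype.card β := by
  obtain ⟨i, -, hi⟩ := exists_min_image univ (fun i => #{b | f b ∈ S i}) univ_nonempty
  refine ⟨i, ?_⟩
  calc Fintype.card ι * #{b | f b ∈ S i}
      ≤ ∑ j, #{b | f b ∈ S j} := card_nsmul_le_sum _ _ _ fun j _ => hi j (mem_univ j)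
    _ = #(univ.biUnion fun j => {b | f b ∈ S j}) := by
      refine (card_biUnion fun j _ j' _ hjj' => ?_).symm
      exact disjoint_filter.2 fun b _ h h' => disjoint_left.1 (hS hjj') h h'
    _ ≤ Fintype.card β := card_le_univ _

lemma two_add_pow_mul_le {k K : ℕ} (hk : k ≤ K) : 2 + K ^ K * k ≤ (K + 2) ^ (K + 1) := by
  have h₁ : 1 ≤ (K + 2) ^ K := Nat.one_le_pow _ _ (by omega)
  have h₂ : K ^ K * k ≤ (K + 2) ^ K * K := Nat.mul_le_mul (Nat.pow_le_pow_left (by omega) K) hk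
  calc 2 + K ^ K * k ≤ (K + 2) ^ K * 2 + (K + 2) ^ K * K := by omega
    _ = (K + 2) ^ (K + 1) := by ring

lemma sq_le_rpow_of_mul_rpow_le {x k a b : ℝ} (hx : 0 < x) (hk : 0 ≤ k) (h : k * x ^ a ≤ x ^ b) :
    k ^ 2 ≤ x ^ (2 * (b - a)) := by
  have hk' : k ≤ x ^ (b - a) := by
    rwa [Real.rpow_sub hx, le_div_iff₀ (Real.rpow_pos_of_pos hx a)]
  calc k ^ 2 ≤ (x ^ (b - a)) ^ 2 := pow_le_pow_left₀ hk hk' 2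
    _ = x ^ (2 * (b - a)) := by rw [mul_comm, ← Real.rpow_mul_natCast hx.le]; norm_num

open Filter Real in
lemma eventually_pow_le_two_rpow {a b : ℝ} (ha : a ≤ 1) (hab : a < b) (hb : 0 < b) :
    ∀ᶠ n : ℕ in atTop, ∀ K : ℕ, (K : ℝ) ≤ (n : ℝ) ^ a →
      (((K + 2) ^ (K + 1) : ℕ) : ℝ) ≤ 2 ^ ((n : ℝ) ^ b) := by
  set a' := max a 0
  have hc : 0 < b - a' := sub_pos.2 (max_lt hab hb)
  have hlog : ∀ᶠ x : ℝ in atTop, 4 * log x ≤ log 2 * x ^ (b - a') := by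
    filter_upwards [(isLittleO_log_rpow_atTop hc).bound (c := log 2 / 4) (by positivity),
      eventually_ge_atTop 0] with x hx hx0
    rw [norm_eq_abs, norm_of_nonneg (rpow_nonneg hx0 _)] at hx
    linarith [le_abs_self (log x)]
  filter_upwards [tendsto_natCast_atTop_atTop.eventually hlog, eventually_ge_atTop 3]
    with n hn hn3 K hK
  have hn1 : (1 : ℝ) ≤ n := by exact_mod_cast (by omega : 1 ≤ n)
  have hn3' : (3 : ℝ) ≤ n := by exact_mod_cast hn3
  have hKa' : (K : ℝ) ≤ (n : ℝ) ^ a' := hK.trans (rpow_le_rpow_of_exponent_le hn1 (le_max_left _ _))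
  have h1a' : 1 ≤ (n : ℝ) ^ a' := one_le_rpow hn1 (le_max_right _ _)
  have hKn : (K : ℝ) + 2 ≤ (n : ℝ) ^ 2 := by
    have : (n : ℝ) ^ a' ≤ n := (rpow_le_rpow_of_exponent_le hn1 (max_le ha zero_le_one)).trans_eq
      (rpow_one _)
    nlinarith
  rw [← log_le_log_iff (by positivity) (by positivity), log_rpow two_pos, Nat.cast_pow, log_pow]
  push_cast
  calc ((K : ℝ) + 1) * log ((K : ℝ) + 2) ≤ (2 * (n : ℝ) ^ a') * (2 * log n) := by
        refine mul_le_mul (by linarith) ?_ (log_nonneg (by linarith)) (by positivity)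
        exact (log_le_log (by positivity) hKn).trans_eq (by rw [log_pow]; norm_num)
    _ = (n : ℝ) ^ a' * (4 * log n) := by ring
    _ ≤ (n : ℝ) ^ a' * (log 2 * (n : ℝ) ^ (b - a')) := by gcongr
    _ = (n : ℝ) ^ b * log 2 := by
      rw [mul_left_comm, ← rpow_add (by positivity)]; ring_nf

/-- For every `ε ∈ (0,1)` there is `N(ε)` such that for every `n ≥ N`,
`δ = ε/3`, and every partition of `[n]` into `m = ⌈n^(1−δ)⌉` blocks each of size at most
`⌈n^δ⌉`, every comparator circuit `C` on `n` variables with at most `n^(1.5−ε)` wires has a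
block `S_i` such that the number of distinct restricted functions `C|ρ`, over assignments
`ρ` to the variables outside `S_i`, is at most `2^(n^(1−ε/2))`. -/
theorem few_restrictions_some_block (ε : ℝ) (hε0 : 0 < ε) (hε1 : ε < 1) :
    ∃ N : ℕ, ∀ n : ℕ, N ≤ n →
      ∀ S : Fin (⌈(n : ℝ) ^ (1 - ε / 3)⌉₊) → Finset (Fin n),
        (∀ i j, i ≠ j → Disjoint (S i) (S j)) →
        (∀ v : Fin n, ∃ i, v ∈ S i) →
        (∀ i, (S i).card ≤ ⌈(n : ℝ) ^ (ε / 3)⌉₊) →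
        ∀ ℓ : ℕ, ∀ C : CompCircuit n ℓ, (ℓ : ℝ) ≤ (n : ℝ) ^ ((1.5 : ℝ) - ε) →
          ∃ i, ({g : (Fin n → Bool) → Bool | ∃ ρ : Fin n → Bool,
                g = fun x => C.eval (fun j => if j ∈ S i then x j else ρ j)}.ncard : ℝ)
            ≤ (2 : ℝ) ^ ((n : ℝ) ^ (1 - ε / 2)) := by
  have hlarge := (eventually_pow_le_two_rpow (a := 1 - 4 * ε / 3) (b := 1 - ε / 2)
    (by linarith) (by linarith) (by linarith)).and (Filter.eventually_gt_atTop 0)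
  obtain ⟨N, hN⟩ := hlarge.exists_forall_of_atTop
  refine ⟨N, fun n hn S hdisj _ _ ℓ C hℓ => ?_⟩
  obtain ⟨hpow, hn0⟩ := hN n hn
  have hnR : (0 : ℝ) < n := by exact_mod_cast hn0
  have : Nonempty (Fin ⌈(n : ℝ) ^ (1 - ε / 3)⌉₊) :=
    ⟨⟨0, Nat.ceil_pos.2 (Real.rpow_pos_of_pos hnR _)⟩⟩
  obtain ⟨i, hi⟩ := exists_card_mul_card_filter_le S (fun i j => hdisj i j) fun w => (C.label w).1
  set k := #{w | (C.label w).1 ∈ S i}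
  have hk : (k : ℝ) ^ 2 ≤ (n : ℝ) ^ (1 - 4 * ε / 3) := by
    refine (sq_le_rpow_of_mul_rpow_le hnR k.cast_nonneg (a := 1 - ε / 3) (b := 1.5 - ε) ?_).trans_eq
      (by ring_nf)
    calc (k : ℝ) * (n : ℝ) ^ (1 - ε / 3) ≤ k * ⌈(n : ℝ) ^ (1 - ε / 3)⌉₊ := by
          gcongr; exact Nat.le_ceil _
      _ ≤ ℓ := by simpa [mul_comm] using (Nat.cast_le (α := ℝ)).2 hi
      _ ≤ _ := hℓ
  refine ⟨i, ?_⟩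
  calc _ ≤ ((2 + (k ^ 2) ^ (k ^ 2) * k : ℕ) : ℝ) := by exact_mod_cast C.ncard_restrictions_le (S i)
    _ ≤ (((k ^ 2 + 2) ^ (k ^ 2 + 1) : ℕ) : ℝ) := by
      exact_mod_cast two_add_pow_mul_le (Nat.le_self_pow two_ne_zero k)
    _ ≤ _ := hpow (k ^ 2) (by exact_mod_cast hk)
end
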